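/- arXiv:2005.05198 — 7 statements merged into one kernel-verified Lean document; each statement's English description precedes it below -/
import Mathlib

section
/- Let G be a countable group, 𝒜 a finite alphabet with |𝒜| ≥ 2, k ∈ ℕ with k ≥ 1, and S ⊆ G a finite set with |S| ≥ k. Let T ⊆ G be a finite set such that k·log_{|𝒜|}|S| < |T|/(2k) and |T △ Ts| < |T|/(2k²) for each s ∈ S. Then the number of patterns w ∈ 𝒜^T having k periods from S is at most |𝒜|^(2|T|/k). -/
/-!
A pattern all of whose periods lie in `P ⊆ S`, `#P = k`, is constant on the classes of the
equivalence on `T` generated by `g ~ g·p` (`p ∈ P`), so it is determined by `P` and a function on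
these classes. A class containing some `g` with `g·P ⊆ T` has at least `k` elements; every other
class meets `{g ∈ T | g·p ∉ T}` for some `p ∈ P`, and these sets have fewer than
`k·|T|/(2k²)` elements in total. Hence there are at most `3|T|/(2k)` classes, and summing over the
at most `|S|^k ≤ |𝒜|^(|T|/(2k))` choices of `P` gives the bound.
-/

/-- A pattern `w : T → 𝒜` has `k` periods from `S` if there are `k` distinct
elements `p ∈ S` such that `w(g) = w(g·p)` whenever `g, g·p ∈ T`. -/
def HasPeriods {G : Type*} [Group G] {A : Type*} (k : ℕ) (S T : Finset G)
    (w : T → A) : Prop :=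
  ∃ P : Finset G, P ⊆ S ∧ P.card = k ∧
    ∀ p ∈ P, ∀ (g : G) (hg : g ∈ T) (hgp : g * p ∈ T), w ⟨g, hg⟩ = w ⟨g * p, hgp⟩

open Finset

theorem mul_card_le_card_add_mul_card_of_le_card_fiber {α β : Type*} [Fintype α] [Fintype β]
    [DecidableEq β] {f : α → β} (hf : Function.Surjective f) (B : Finset α) (n : ℕ)
    (hn : ∀ a ∉ B, n ≤ #{x | f x = f a}) :
    n * Fintype.card β ≤ Fintype.card α + n * #B := by
  classical
  set good := Bᶜ.image f
  have hgood : n * #good ≤ Fintype.card α :=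
    calc n * #good = ∑ _b ∈ good, n := by rw [sum_const, smul_eq_mul, mul_comm]
      _ ≤ ∑ b ∈ good, #{a | f a = b} := sum_le_sum fun _ hb ↦ by
          obtain ⟨a, ha, rfl⟩ := mem_image.1 hb
          exact hn a (mem_compl.1 ha)
      _ = #{a | f a ∈ good} := sum_card_fiberwise_eq_card_filter _ _ _
      _ ≤ Fintype.card α := card_le_univ _
  have hcover : Fintype.card β ≤ #good + #B := by
    calc Fintype.card β ≤ #(good ∪ B.image f) := by
          rw [← card_univ]
          refine card_le_card fun b _ ↦ ?_
          obtain ⟨a, rfl⟩ := hf b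
          by_cases ha : a ∈ B
          · exact mem_union_right _ (mem_image_of_mem f ha)
          · exact mem_union_left _ (mem_image_of_mem f (mem_compl.2 ha))
      _ ≤ #good + #(B.image f) := card_union_le _ _
      _ ≤ #good + #B := by gcongr; exact card_image_le
  calc n * Fintype.card β ≤ n * #good + n * #B := by rw [← mul_add]; gcongr
    _ ≤ Fintype.card α + n * #B := by gcongr

section Periods

variable {G : Type*} [Group G]

def IsPeriodicBy {A : Type*} (P T : Finset G) (w : T → A) : Prop :=
  ∀ p ∈ P, ∀ (g : G) (hg : g ∈ T) (hgp : g * p ∈ T), w ⟨g, hg⟩ = w ⟨g * p, hgp⟩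

def PeriodRel (P T : Finset G) (a b : T) : Prop :=
  ∃ p ∈ P, (a : G) * p = b

theorem card_isPeriodicBy_le {A : Type*} [Finite A] (P T : Finset G) :
    Nat.card {w : T → A // IsPeriodicBy P T w}
      ≤ Nat.card A ^ Nat.card (Quot (PeriodRel P T)) := by
  rw [← Nat.card_fun]
  refine Nat.card_le_card_of_injective
    (fun w ↦ Quot.lift w.1 fun ⟨a, ha⟩ ⟨b, hb⟩ ⟨p, hp, hab⟩ ↦ ?_) fun w v hwv ↦ ?_
  · obtain rfl : a * p = b := hab
    exact w.2 p hp a ha hb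
  · ext1
    funext g
    exact congrFun hwv (Quot.mk _ g)

theorem card_hasPeriods_le_sum {A : Type*} [Finite A] (k : ℕ) (S T : Finset G) :
    Nat.card {w : T → A // HasPeriods k S T w}
      ≤ ∑ P ∈ S.powersetCard k, Nat.card A ^ Nat.card (Quot (PeriodRel P T)) := by
  calc Nat.card {w : T → A // HasPeriods k S T w}
      ≤ Nat.card (Σ P : S.powersetCard k, {w : T → A // IsPeriodicBy P.1 T w}) := by
        refine Nat.card_le_card_of_surjective
          (fun x ↦ ⟨x.2.1, x.1, (mem_powersetCard.1 x.1.2).1, (mem_powersetCard.1 x.1.2).2, x.2.2⟩)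
          fun ⟨w, P, hPS, hPk, hw⟩ ↦ ⟨⟨⟨P, mem_powersetCard.2 ⟨hPS, hPk⟩⟩, w, hw⟩, rfl⟩
    _ = ∑ P : S.powersetCard k, Nat.card {w : T → A // IsPeriodicBy P.1 T w} := Nat.card_sigma
    _ ≤ ∑ P : S.powersetCard k, Nat.card A ^ Nat.card (Quot (PeriodRel P.1 T)) :=
        sum_le_sum fun P _ ↦ card_isPeriodicBy_le P.1 T
    _ = _ := sum_coe_sort _ fun P ↦ Nat.card A ^ Nat.card (Quot (PeriodRel P T))

variable [DecidableEq G]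

open Classical in
theorem card_le_card_fiber_periodRel {P T : Finset G} {g : T} (hg : ∀ p ∈ P, (g : G) * p ∈ T) :
    #P ≤ #{x | Quot.mk (PeriodRel P T) x = Quot.mk _ g} := by
  calc #P = #(P.image ((g : G) * ·)) := (card_image_of_injective _ (mul_right_injective _)).symm
    _ = #((P.image ((g : G) * ·)).subtype (· ∈ T)) := by
        rw [card_subtype, filter_true_of_mem]
        intro _ hx
        obtain ⟨p, hp, rfl⟩ := mem_image.1 hx
        exact hg p hp
    _ ≤ #{x | Quot.mk (PeriodRel P T) x = Quot.mk _ g} := by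
        refine card_le_card fun x hx ↦ ?_
        obtain ⟨p, hp, hpx⟩ := mem_image.1 (mem_subtype.1 hx)
        exact mem_filter.2 ⟨mem_univ _, (Quot.sound ⟨p, hp, hpx⟩).symm⟩

theorem card_filter_mul_notMem_le (T : Finset G) (p : G) :
    #{g : T | (g : G) * p ∉ T} ≤ #(T.image (· * p) \ T) :=
  card_le_card_of_injOn (fun g ↦ (g : G) * p)
    (fun g hg ↦ mem_sdiff.2 ⟨mem_image_of_mem _ g.2, (mem_filter.1 hg).2⟩)
    fun _ _ _ _ h ↦ Subtype.ext (mul_right_cancel h)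

theorem card_quot_periodRel_mul_le (P T : Finset G) :
    #P * Nat.card (Quot (PeriodRel P T))
      ≤ #T + #P * ∑ p ∈ P, #(T.image (· * p) \ T) := by
  classical
  have := Fintype.ofFinite (Quot (PeriodRel P T))
  let bad : Finset T := {g | ∃ p ∈ P, (g : G) * p ∉ T}
  have hbad : #bad ≤ ∑ p ∈ P, #(T.image (· * p) \ T) :=
    calc #bad ≤ #(P.biUnion fun p ↦ {g : T | (g : G) * p ∉ T}) :=
          card_le_card fun g hg ↦ by simpa [bad] using hg
      _ ≤ ∑ p ∈ P, #{g : T | (g : G) * p ∉ T} := card_biUnion_le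
      _ ≤ _ := sum_le_sum fun p _ ↦ card_filter_mul_notMem_le T p
  calc #P * Nat.card (Quot (PeriodRel P T)) ≤ Fintype.card T + #P * #bad := by
        rw [Nat.card_eq_fintype_card]
        refine mul_card_le_card_add_mul_card_of_le_card_fiber Quot.mk_surjective bad _
          fun g hg ↦ card_le_card_fiber_periodRel fun p hp ↦ ?_
        by_contra h
        exact hg (by simpa [bad] using ⟨p, hp, h⟩)
    _ ≤ _ := by rw [Fintype.card_coe]; gcongr

theorem card_quot_periodRel_le (T : Finset G) {P : Finset G} (hP : P.Nonempty) {ε : ℝ}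
    (hε : ∀ p ∈ P, (#(T.image (· * p) \ T) : ℝ) ≤ ε) :
    (Nat.card (Quot (PeriodRel P T)) : ℝ) ≤ #T / #P + #P * ε := by
  have hP0 : (0 : ℝ) < #P := by exact_mod_cast hP.card_pos
  have hmul : (#P : ℝ) * Nat.card (Quot (PeriodRel P T))
      ≤ #T + #P * ∑ p ∈ P, (#(T.image (· * p) \ T) : ℝ) := by
    exact_mod_cast card_quot_periodRel_mul_le P T
  have hsum : ∑ p ∈ P, (#(T.image (· * p) \ T) : ℝ) ≤ #P * ε := by
    simpa using sum_le_sum hε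
  rw [div_add' _ _ _ hP0.ne', le_div_iff₀ hP0]
  nlinarith

end Periods

theorem card_patterns_with_periods_le_general {G A : Type*} [Group G] [DecidableEq G]
    [Fintype A] (hA : 2 ≤ Fintype.card A)
    (k : ℕ) (hk : 1 ≤ k) (S T : Finset G) (hSk : k ≤ S.card)
    (h1 : (k : ℝ) * Real.logb (Fintype.card A) S.card < (T.card : ℝ) / (2 * k))
    (h2 : ∀ s ∈ S,
      ((((T \ T.image (· * s)) ∪ (T.image (· * s) \ T)).card : ℝ)) < (T.card : ℝ) / (2 * k ^ 2)) :
    (Nat.card {w : T → A // HasPeriods k S T w} : ℝ)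
      ≤ (Fintype.card A : ℝ) ^ (2 * (T.card : ℝ) / k) := by
  have ha : (1 : ℝ) < Fintype.card A := by exact_mod_cast hA
  set a := (Fintype.card A : ℝ)
  have hclasses : ∀ P ∈ S.powersetCard k,
      (Nat.card (Quot (PeriodRel P T)) : ℝ) ≤ 3 * #T / (2 * k) := by
    intro P hP
    obtain ⟨hPS, rfl⟩ := mem_powersetCard.1 hP
    refine (card_quot_periodRel_le T (card_pos.1 hk) (ε := #T / (2 * #P ^ 2))
      fun p hp ↦ ?_).trans_eq (by field_simp; ring)
    exact le_trans (by exact_mod_cast card_le_card subset_union_right) (h2 p (hPS hp)).le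
  have hS : (#S : ℝ) ^ k ≤ a ^ (#T / (2 * k) : ℝ) :=
    (Real.logb_le_iff_le_rpow ha (pow_pos (Nat.cast_pos.2 (hk.trans hSk)) k)).1
      (by rw [Real.logb_pow]; exact h1.le)
  calc (Nat.card {w : T → A // HasPeriods k S T w} : ℝ)
      ≤ ∑ P ∈ S.powersetCard k, a ^ Nat.card (Quot (PeriodRel P T)) := by
        simpa [a] using (Nat.cast_le (α := ℝ)).2 (card_hasPeriods_le_sum (A := A) k S T)
    _ ≤ ∑ P ∈ S.powersetCard k, a ^ (3 * #T / (2 * k) : ℝ) := sum_le_sum fun P hP ↦ by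
        rw [← Real.rpow_natCast]; exact Real.rpow_le_rpow_of_exponent_le ha.le (hclasses P hP)
    _ ≤ #S ^ k * a ^ (3 * #T / (2 * k) : ℝ) := by
        rw [sum_const, card_powersetCard, nsmul_eq_mul]
        gcongr
        exact_mod_cast Nat.choose_le_pow _ _
    _ ≤ a ^ (#T / (2 * k) : ℝ) * a ^ (3 * #T / (2 * k) : ℝ) := by gcongr
    _ = a ^ (2 * (T.card : ℝ) / k) := by
        rw [← Real.rpow_add (by positivity)]
        congr 1
        field_simp
        ring

/-- If `k·log_{|𝒜|}|S| < |T|/(2k)` and `|T △ Ts| < |T|/(2k²)` for every `s ∈ S`,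
then the number of patterns `w ∈ 𝒜^T` having `k` periods from `S` is at most
`|𝒜|^(2|T|/k)`. -/
theorem card_patterns_with_periods_le {G A : Type*} [Group G] [Countable G] [DecidableEq G]
    [Fintype A] (hA : 2 ≤ Fintype.card A)
    (k : ℕ) (hk : 1 ≤ k) (S T : Finset G) (hSk : k ≤ S.card)
    (h1 : (k : ℝ) * Real.logb (Fintype.card A) S.card < (T.card : ℝ) / (2 * k))
    (h2 : ∀ s ∈ S,
      ((((T \ T.image (· * s)) ∪ (T.image (· * s) \ T)).card : ℝ)) < (T.card : ℝ) / (2 * k ^ 2)) :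
    (Nat.card {w : T → A // HasPeriods k S T w} : ℝ)
      ≤ (Fintype.card A : ℝ) ^ (2 * (T.card : ℝ) / k) :=
  card_patterns_with_periods_le_general hA k hk S T hSk h1 h2
end

section
/- Let G be a group, k ∈ ℕ, P ⊆ G finite with |P| = k, and T ⊆ G finite such that |T △ Tp| < δ|T|/k for each p ∈ P, where δ > 0. Define a graph on vertex set T with edges (g,h) whenever h = gp or g = hp for some p ∈ P. Then the number of elements g ∈ T whose connected component has cardinality less than k is less than δ|T|. -/
/-!
If `g ∈ T` lies in `T p` for every `p ∈ P`, then the `k` distinct elements `g p⁻¹` (`p ∈ P`) of `T`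
are joined to `g` by an edge (or equal `g`), so the component of `g` has at least `k` elements.
Hence every vertex in a component of size `< k` lies in `⋃_{p ∈ P} (T \ T p)`, a set of size
less than `k · δ|T|/k = δ|T|`.
-/

/-- The graph on vertex set `T` with `g ~ h` iff `h = g·p` or `g = h·p` for some `p ∈ P`. -/
def periodGraph {G : Type*} [Group G] (P T : Finset G) : SimpleGraph T where
  Adj g h := g ≠ h ∧ ∃ p ∈ P, (h : G) = (g : G) * p ∨ (g : G) = (h : G) * p
  symm := by
    constructor
    rintro g h ⟨hne, p, hp, hc⟩
    exact ⟨hne.symm, p, hp, hc.symm⟩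
  loopless := by constructor; rintro g ⟨hne, -⟩; exact hne rfl

theorem Finset.natCard_subtype_le_card {α : Type*} {T S : Finset α} {Q : T → Prop}
    (hQ : ∀ g, Q g → (g : α) ∈ S) : Nat.card {g : T // Q g} ≤ S.card := by
  rw [← Nat.card_eq_finsetCard S]
  exact Nat.card_le_card_of_injective (fun g => ⟨g.1, hQ g.1 g.2⟩)
    fun a b hab => Subtype.ext (Subtype.ext (congrArg (fun x => (x.1 : α)) hab))

namespace periodGraph

variable {G : Type*} [Group G] {P T : Finset G}

theorem reachable_mul_inv {p : G} (hp : p ∈ P) (g : T) (hgp : (g : G) * p⁻¹ ∈ T) :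
    (periodGraph P T).Reachable g ⟨g * p⁻¹, hgp⟩ := by
  by_cases heq : g = ⟨g * p⁻¹, hgp⟩
  · rw [← heq]
  · exact SimpleGraph.Adj.reachable ⟨heq, p, hp, Or.inr (by simp)⟩

theorem card_le_natCard_reachable {g : T} (hg : ∀ p ∈ P, (g : G) * p⁻¹ ∈ T) :
    P.card ≤ Nat.card {h : T // (periodGraph P T).Reachable g h} := by
  rw [← Nat.card_eq_finsetCard P]
  refine Nat.card_le_card_of_injective
    (fun p => ⟨⟨g * (p : G)⁻¹, hg p p.2⟩, reachable_mul_inv p.2 g (hg p p.2)⟩) ?_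
  intro p q hpq
  have h : (g : G) * (p : G)⁻¹ = g * (q : G)⁻¹ := congrArg (fun x => (x.1 : G)) hpq
  exact Subtype.ext (inv_injective (mul_left_cancel h))

theorem mem_biUnion_sdiff_of_natCard_reachable_lt [DecidableEq G] {g : T}
    (hg : Nat.card {h : T // (periodGraph P T).Reachable g h} < P.card) :
    (g : G) ∈ P.biUnion fun p => T \ T.image (· * p) := by
  by_contra hgS
  refine hg.not_ge (card_le_natCard_reachable fun p hp => ?_)
  have hgTp : (g : G) ∈ T.image (· * p) := by
    by_contra h
    exact hgS (Finset.mem_biUnion.2 ⟨p, hp, Finset.mem_sdiff.2 ⟨g.2, h⟩⟩)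
  obtain ⟨t, ht, htp⟩ := Finset.mem_image.1 hgTp
  simpa [← htp] using ht

end periodGraph

theorem card_small_components_lt_general {G : Type*} [Group G] [DecidableEq G]
    (k : ℕ) (hk : 1 ≤ k) (δ : ℝ)
    (P T : Finset G) (hP : P.card = k)
    (hT : ∀ p ∈ P,
      ((((T \ T.image (· * p)) ∪ (T.image (· * p) \ T)).card : ℝ)) < δ * T.card / k) :
    (Nat.card {g : T // Nat.card {h : T // (periodGraph P T).Reachable g h} < k} : ℝ)
      < δ * T.card := by
  have hsmall : Nat.card {g : T // Nat.card {h : T // (periodGraph P T).Reachable g h} < k}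
      ≤ (P.biUnion fun p => T \ T.image (· * p)).card :=
    Finset.natCard_subtype_le_card fun g hg =>
      periodGraph.mem_biUnion_sdiff_of_natCard_reachable_lt (hP ▸ hg)
  have hPne : P.Nonempty := Finset.card_pos.1 (by omega)
  calc (Nat.card {g : T // Nat.card {h : T // (periodGraph P T).Reachable g h} < k} : ℝ)
      ≤ ∑ p ∈ P, ((T \ T.image (· * p)).card : ℝ) := by
        exact_mod_cast hsmall.trans Finset.card_biUnion_le
    _ < ∑ _p ∈ P, δ * T.card / k := by
        refine Finset.sum_lt_sum_of_nonempty hPne fun p hp => lt_of_le_of_lt ?_ (hT p hp)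
        exact_mod_cast Finset.card_le_card Finset.subset_union_left
    _ = δ * T.card := by
        rw [Finset.sum_const, hP, nsmul_eq_mul]
        field_simp

/-- If `|T △ Tp| < δ|T|/k` for every `p ∈ P`, where `|P| = k`, then the number of
`g ∈ T` whose connected component in the period graph has fewer than `k` elements
is less than `δ|T|`. -/
theorem card_small_components_lt {G : Type*} [Group G] [DecidableEq G]
    (k : ℕ) (hk : 1 ≤ k) (δ : ℝ) (hδ : 0 < δ)
    (P T : Finset G) (hP : P.card = k)
    (hT : ∀ p ∈ P,
      ((((T \ T.image (· * p)) ∪ (T.image (· * p) \ T)).card : ℝ)) < δ * T.card / k) :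
    (Nat.card {g : T // Nat.card {h : T // (periodGraph P T).Reachable g h} < k} : ℝ)
      < δ * T.card :=
  card_small_components_lt_general k hk δ P T hP hT
end

section
/- Marker Lemma: Let G be a countable group, X a G-subshift over a finite alphabet, S, T ⊆ G finite, and 1 ≤ k ≤ |S|. Then there exists a clopen set F ⊆ X such that (1) the collection {σˢ(F) : s ∈ S} is (k+1)-fold disjoint (every k+1 distinct shifts have empty intersection), and (2) if x ∉ ⋃_{s ∈ S⁻¹S} σˢ(F), then the pattern x(T) has k periods from S⁻¹S. -/
open Pointwise

/-- The shift action of `G` on `𝒜^G`: `(σᵍ x)(h) = x(hg)`. -/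
def shiftMap {G A : Type*} [Group G] (g : G) (x : G → A) : G → A := fun h => x (h * g)

/-!
Let `Q = S⁻¹S`. A point is bad if its `T`-pattern lacks `k` periods from `Q`; the bad points
fall into finitely many clopen cylinders, one for each bad pattern. Within one such cylinder the
`S`-shifts are already `(k+1)`-fold disjoint: if `σˢ⁻¹ y` has the same pattern `w` for `k + 1`
elements `s ∈ P`, then the elements `s₀⁻¹ t` (`t ∈ P`) are `k + 1` periods of `w`. The marker
set is built greedily, cylinder by cylinder: each time, add the points of the cylinder not
already covered by a `Q`-shift of the current set. A point added now and a point added before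
can never lie in a common family `σˢ⁻¹ y`, `σᵗ⁻¹ y`, since they differ by the shift `s⁻¹ t ∈ Q`.
-/

def cylinder {G A : Type*} (T : Finset G) (w : T → A) : Set (G → A) :=
  {x | (fun g : T => x g) = w}

theorem isClopen_cylinder {G A : Type*} [TopologicalSpace A] [DiscreteTopology A]
    (T : Finset G) (w : T → A) : IsClopen (cylinder T w) :=
  (isClopen_discrete {w}).preimage (continuous_pi fun g => continuous_apply (g : G))

section Shift

variable {G A : Type*} [Group G]

theorem shiftMap_shiftMap (g h : G) (x : G → A) :
    shiftMap g (shiftMap h x) = shiftMap (g * h) x := by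
  funext a; simp [shiftMap, mul_assoc]

theorem shiftMap_one (x : G → A) : shiftMap (1 : G) x = x := by
  funext a; simp [shiftMap]

theorem mem_shiftMap_image {s : G} {F : Set (G → A)} {y : G → A} :
    y ∈ shiftMap s '' F ↔ shiftMap s⁻¹ y ∈ F := by
  constructor
  · rintro ⟨z, hz, rfl⟩
    rwa [shiftMap_shiftMap, inv_mul_cancel, shiftMap_one]
  · exact fun h => ⟨shiftMap s⁻¹ y, h, by rw [shiftMap_shiftMap, mul_inv_cancel, shiftMap_one]⟩

theorem continuous_shiftMap [TopologicalSpace A] (g : G) :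
    Continuous (shiftMap g : (G → A) → (G → A)) :=
  continuous_pi fun h => continuous_apply (h * g)

theorem isClopen_preimage_shiftMap_image [TopologicalSpace A] {X : Set (G → A)}
    (hXi : ∀ g : G, ∀ x ∈ X, shiftMap g x ∈ X) (q : G) {F : Set (G → A)}
    (hF : IsClopen ((↑) ⁻¹' F : Set X)) : IsClopen ((↑) ⁻¹' (shiftMap q '' F) : Set X) := by
  have hcont : Continuous fun x : X => (⟨shiftMap q⁻¹ x, hXi q⁻¹ x x.2⟩ : X) :=
    ((continuous_shiftMap q⁻¹).comp continuous_subtype_val).subtype_mk _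
  convert hF.preimage hcont using 1
  ext x
  exact mem_shiftMap_image

def ShiftsDisjoint (S : Finset G) (m : ℕ) (F : Set (G → A)) : Prop :=
  ∀ P : Finset G, P ⊆ S → P.card = m → (⋂ s ∈ P, shiftMap s '' F) = ∅

theorem shiftsDisjoint_iff {S : Finset G} {m : ℕ} {F : Set (G → A)} :
    ShiftsDisjoint S m F ↔
      ∀ P : Finset G, P ⊆ S → P.card = m → ∀ y, ¬ ∀ s ∈ P, shiftMap s⁻¹ y ∈ F := by
  simp only [ShiftsDisjoint, Set.eq_empty_iff_forall_notMem, Set.mem_iInter₂,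
    mem_shiftMap_image]

theorem ShiftsDisjoint.mono {S : Finset G} {m : ℕ} {F C : Set (G → A)}
    (hC : ShiftsDisjoint S m C) (hFC : F ⊆ C) : ShiftsDisjoint S m F := by
  rw [shiftsDisjoint_iff] at *
  exact fun P hPS hPm y hy => hC P hPS hPm y fun s hs => hFC (hy s hs)

theorem shiftsDisjoint_empty (S : Finset G) {m : ℕ} (hm : m ≠ 0) :
    ShiftsDisjoint S m (∅ : Set (G → A)) := by
  rw [shiftsDisjoint_iff]
  intro P _ hPm y hy
  obtain ⟨s, hs⟩ : P.Nonempty := Finset.card_pos.mp (by omega)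
  exact hy s hs

/-- A point of `C` outside the `S⁻¹S`-shifts of `F` is never an `S⁻¹S`-shift of a point of `F`,
so no family `σˢ⁻¹ y` (`s ∈ P`) can mix old and new points. -/
theorem ShiftsDisjoint.union_diff [DecidableEq G] {S : Finset G} {m : ℕ} {F C : Set (G → A)}
    (hF : ShiftsDisjoint S m F) (hC : ShiftsDisjoint S m C) :
    ShiftsDisjoint S m (F ∪ (C \ ⋃ q ∈ S⁻¹ * S, shiftMap q '' F)) := by
  rw [shiftsDisjoint_iff] at *
  intro P hPS hPm y hy
  by_cases hmeet : ∃ t ∈ P, shiftMap t⁻¹ y ∈ F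
  · obtain ⟨t, ht, hFt⟩ := hmeet
    refine hF P hPS hPm y fun s hs => (hy s hs).resolve_right fun hnew => hnew.2 ?_
    refine Set.mem_biUnion (Finset.mul_mem_mul (Finset.inv_mem_inv (hPS hs)) (hPS ht))
      ⟨_, hFt, ?_⟩
    rw [shiftMap_shiftMap]
    congr 1
    group
  · push Not at hmeet
    exact hC P hPS hPm y fun s hs => ((hy s hs).resolve_left (hmeet s hs)).1

theorem shiftsDisjoint_cylinder [DecidableEq G] {S T : Finset G} {k : ℕ} {w : T → A}
    (hw : ¬ HasPeriods k (S⁻¹ * S) T w) : ShiftsDisjoint S (k + 1) (cylinder T w) := by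
  rw [shiftsDisjoint_iff]
  intro P hPS hPk y hy
  obtain ⟨s₀, hs₀⟩ : P.Nonempty := Finset.card_pos.mp (by omega)
  have hcard : k ≤ (P.image (s₀⁻¹ * ·)).card := by
    rw [Finset.card_image_of_injective _ (mul_right_injective s₀⁻¹)]
    omega
  obtain ⟨P', hP'P, hP'k⟩ := Finset.exists_subset_card_eq hcard
  refine hw ⟨P', fun p hp => ?_, hP'k, fun p hp g hg hgp => ?_⟩
  · obtain ⟨t, ht, rfl⟩ := Finset.mem_image.mp (hP'P hp)
    exact Finset.mul_mem_mul (Finset.inv_mem_inv (hPS hs₀)) (hPS ht)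
  · obtain ⟨t, ht, rfl⟩ := Finset.mem_image.mp (hP'P hp)
    rw [← congrFun (hy s₀ hs₀) ⟨g, hg⟩, ← congrFun (hy t ht) ⟨_, hgp⟩]
    simp only [shiftMap]
    congr 1
    group

end Shift

theorem mem_iUnion_shiftMap_union_diff {G A : Type*} [Group G] {Q : Finset G} (hQ : 1 ∈ Q)
    {F C : Set (G → A)} {x : G → A} (hx : x ∈ C) :
    x ∈ ⋃ q ∈ Q, shiftMap q '' (F ∪ (C \ ⋃ q ∈ Q, shiftMap q '' F)) := by
  by_cases hxF : x ∈ ⋃ q ∈ Q, shiftMap q '' F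
  · exact Set.biUnion_mono subset_rfl (fun q _ => Set.image_mono Set.subset_union_left) hxF
  · exact Set.mem_biUnion hQ ⟨x, Or.inr ⟨hx, hxF⟩, shiftMap_one x⟩

theorem exists_shiftsDisjoint_covering {G A : Type*} [Group G] [DecidableEq G]
    [TopologicalSpace A] [DiscreteTopology A] {X : Set (G → A)}
    (hXi : ∀ g : G, ∀ x ∈ X, shiftMap g x ∈ X) {S T : Finset G} (hS : S.Nonempty) (k : ℕ)
    (Λ : Finset (T → A)) (hΛ : ∀ w ∈ Λ, ¬ HasPeriods k (S⁻¹ * S) T w) :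
    ∃ F ⊆ X, IsClopen ((↑) ⁻¹' F : Set X) ∧ ShiftsDisjoint S (k + 1) F ∧
      ∀ x ∈ X, (fun g : T => x g) ∈ Λ → x ∈ ⋃ q ∈ S⁻¹ * S, shiftMap q '' F := by
  classical
  induction Λ using Finset.induction_on with
  | empty =>
    exact ⟨∅, Set.empty_subset X, isClopen_empty, shiftsDisjoint_empty S k.succ_ne_zero,
      by simp⟩
  | insert w Λ _ ih =>
    obtain ⟨F, hFX, hFclopen, hFdisj, hFcover⟩ := ih fun v hv => hΛ v (Finset.mem_insert_of_mem hv)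
    have hQ : (1 : G) ∈ S⁻¹ * S := by
      obtain ⟨s, hs⟩ := hS
      simpa using Finset.mul_mem_mul (Finset.inv_mem_inv hs) hs
    set C := X ∩ cylinder T w
    have hCclopen : IsClopen ((↑) ⁻¹' C : Set X) := by
      rw [Set.preimage_inter, Subtype.coe_preimage_self, Set.univ_inter]
      exact (isClopen_cylinder T w).preimage continuous_subtype_val
    refine ⟨F ∪ (C \ ⋃ q ∈ S⁻¹ * S, shiftMap q '' F),
      Set.union_subset hFX (Set.sdiff_subset.trans Set.inter_subset_left), ?_,
      hFdisj.union_diff ((shiftsDisjoint_cylinder (hΛ w (Finset.mem_insert_self w Λ))).mono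
        Set.inter_subset_right), fun x hx hxΛ => ?_⟩
    · rw [Set.preimage_union, Set.preimage_sdiff, Set.preimage_iUnion₂]
      exact hFclopen.union (hCclopen.diff ((S⁻¹ * S).finite_toSet.isClopen_biUnion
        fun q _ => isClopen_preimage_shiftMap_image hXi q hFclopen))
    · rcases Finset.mem_insert.mp hxΛ with hxw | hxΛ
      · exact mem_iUnion_shiftMap_union_diff hQ ⟨hx, hxw⟩
      · exact Set.biUnion_mono subset_rfl (fun q _ => Set.image_mono Set.subset_union_left)
          (hFcover x hx hxΛ)

theorem marker_lemma_general {G A : Type*} [Group G] [DecidableEq G]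
    [Fintype A] [TopologicalSpace A] [DiscreteTopology A]
    (X : Set (G → A))
    (hXi : ∀ g : G, ∀ x ∈ X, shiftMap g x ∈ X)
    (S T : Finset G) (k : ℕ) (hk1 : 1 ≤ k) (hk2 : k ≤ S.card) :
    ∃ F : Set (G → A), F ⊆ X ∧ IsClopen ((↑·) ⁻¹' F : Set X) ∧
      (∀ P : Finset G, P ⊆ S → P.card = k + 1 → (⋂ s ∈ P, shiftMap s '' F) = ∅) ∧
      (∀ x ∈ X, x ∉ (⋃ s ∈ S⁻¹ * S, shiftMap s '' F) →
        HasPeriods k (S⁻¹ * S) T (fun g : T => x g)) := by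
  classical
  have hS : S.Nonempty := Finset.card_pos.mp (by omega)
  obtain ⟨F, hFX, hFclopen, hFdisj, hFcover⟩ :=
    exists_shiftsDisjoint_covering hXi hS k (Finset.univ.filter fun w => ¬ HasPeriods k _ T w)
      fun w hw => (Finset.mem_filter.mp hw).2
  refine ⟨F, hFX, hFclopen, hFdisj, fun x hx hxF => ?_⟩
  by_contra hbad
  exact hxF (hFcover x hx (Finset.mem_filter.mpr ⟨Finset.mem_univ _, hbad⟩))

/-- Marker Lemma: for a `G`-subshift `X`, finite `S, T ⊆ G` and `1 ≤ k ≤ |S|`,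
there is a clopen `F ⊆ X` such that the shifts `{σˢ(F) : s ∈ S}` are `(k+1)`-fold
disjoint, and any `x ∈ X` avoiding `⋃_{s ∈ S⁻¹S} σˢ(F)` has `x(T)` with `k` periods
from `S⁻¹S`. -/
theorem marker_lemma {G A : Type*} [Group G] [Countable G] [DecidableEq G]
    [Fintype A] [TopologicalSpace A] [DiscreteTopology A]
    (X : Set (G → A)) (hXc : IsClosed X)
    (hXi : ∀ g : G, ∀ x ∈ X, shiftMap g x ∈ X)
    (S T : Finset G) (k : ℕ) (hk1 : 1 ≤ k) (hk2 : k ≤ S.card) :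
    ∃ F : Set (G → A), F ⊆ X ∧ IsClopen ((↑·) ⁻¹' F : Set X) ∧
      (∀ P : Finset G, P ⊆ S → P.card = k + 1 → (⋂ s ∈ P, shiftMap s '' F) = ∅) ∧
      (∀ x ∈ X, x ∉ (⋃ s ∈ S⁻¹ * S, shiftMap s '' F) →
        HasPeriods k (S⁻¹ * S) T (fun g : T => x g)) :=
  marker_lemma_general X hXi S T k hk1 hk2
end

section
/- Covering Lemma: Let δ ∈ (0,1) and suppose {S₁,…,S_N} is a collection of finite subsets of a countable amenable group G that δ-quasitiles G, with m = |S₁| = minᵢ |Sᵢ| and S = ⋃ᵢ Sᵢ = S_N. Let F be a finite subset of G with |S S⁻¹ F △ F| < δ|F|. Then there exists C ⊆ G such that {Sc : c ∈ C} (1-δ)-covers F and |C| ≤ (1+δ)|F| / ((1-δ)m). -/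
open Pointwise

/-- Right translate `Tc = {t·c : t ∈ T}` of a finite set. -/
def transl {G : Type*} [Group G] [DecidableEq G] (T : Finset G) (c : G) : Finset G :=
  T.image (· * c)

/-- `{C₁,…,C_N}` is a collection of center sets for `D` (with tiles `T₁,…,T_N` and
parameter `δ`): each `{Tᵢc : c ∈ Cᵢ}` is δ-disjoint, the `TᵢCᵢ` are pairwise disjoint
over `i`, and `{T₁C₁,…,T_NC_N}` `(1-δ)`-covers `D`. -/
def CenterSets {G : Type*} [Group G] [DecidableEq G] (δ : ℝ) {N : ℕ}
    (T : Fin N → Finset G) (D : Finset G) (C : Fin N → Finset G) : Prop :=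
  (∀ i, ∃ B : G → Finset G,
      (∀ c ∈ C i, B c ⊆ transl (T i) c ∧
        (1 - δ) * ((transl (T i) c).card : ℝ) < ((B c).card : ℝ)) ∧
      ((C i : Set G).Pairwise fun c c' => Disjoint (B c) (B c'))) ∧
  (∀ i j, i ≠ j → Disjoint (T i * C i) (T j * C j)) ∧
  ((1 - δ) * (D.card : ℝ) ≤ ((D ∩ Finset.univ.biUnion fun i => T i * C i).card : ℝ))

/-- `{T₁,…,T_N}` δ-quasitiles `G`: `e ∈ T₁ ⊆ … ⊆ T_N` and every finite `D ⊆ G`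
admits a collection of center sets. -/
def QuasiTiles {G : Type*} [Group G] [DecidableEq G] (δ : ℝ) {N : ℕ}
    (T : Fin N → Finset G) : Prop :=
  (∀ ⦃i j : Fin N⦄, i ≤ j → T i ⊆ T j) ∧ (∀ i, (1 : G) ∈ T i) ∧
    ∀ D : Finset G, ∃ C : Fin N → Finset G, CenterSets δ T D C

/-- Covering Lemma: if `{S₁,…,S_N}` δ-quasitiles `G`, `m = |S₁| = minᵢ|Sᵢ|`,
`S = ⋃ᵢSᵢ`, and `F` is finite with `|SS⁻¹F △ F| < δ|F|`, then there is `C ⊆ G` with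
`{Sc : c ∈ C}` `(1-δ)`-covering `F` and `|C| ≤ (1+δ)|F|/((1-δ)m)`. -/
theorem covering_lemma {G : Type*} [Group G] [Countable G] [DecidableEq G]
    (δ : ℝ) (hδ0 : 0 < δ) (hδ1 : δ < 1) (N : ℕ) [NeZero N]
    (S : Fin N → Finset G) (hQT : QuasiTiles δ S)
    (m : ℕ) (hm : m = (S 0).card) (hmin : ∀ i, m ≤ (S i).card)
    (Sb : Finset G) (hSb : Sb = Finset.univ.biUnion S)
    (F : Finset G)
    (hF : ((((Sb * Sb⁻¹ * F) \ F) ∪ (F \ (Sb * Sb⁻¹ * F))).card : ℝ) < δ * F.card) :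
    ∃ C : Finset G,
      (1 - δ) * (F.card : ℝ) ≤ ((F ∩ C.biUnion fun c => transl Sb c).card : ℝ) ∧
      (C.card : ℝ) ≤ (1 + δ) * F.card / ((1 - δ) * m) := by
  classical
  obtain ⟨hmono, hone, hD⟩ := hQT
  obtain ⟨C0, hBex, hdisj, hcov⟩ := hD F
  choose B hBc hBpair using hBex
  set C' : Fin N → Finset G :=
    fun i => (C0 i).filter (fun c => ((transl (S i) c) ∩ F).Nonempty) with hC'def
  have hδm : (0:ℝ) < (1 - δ) * m := by
    have hm1 : 1 ≤ m := by
      rw [hm]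
      exact Finset.card_pos.mpr ⟨1, hone 0⟩
    have : (1:ℝ) ≤ m := by exact_mod_cast hm1
    nlinarith
  have hSbmem : ∀ i, ∀ s ∈ S i, s ∈ Sb := by
    intro i s hs
    rw [hSb]
    exact Finset.mem_biUnion.mpr ⟨i, Finset.mem_univ i, hs⟩
  refine ⟨Finset.univ.biUnion C', ?_, ?_⟩
  · -- cover
    refine le_trans hcov ?_
    have hsub : (F ∩ Finset.univ.biUnion fun i => S i * C0 i) ⊆
        (F ∩ (Finset.univ.biUnion C').biUnion fun c => transl Sb c) := by
      intro x hx
      obtain ⟨hxF, hx2⟩ := Finset.mem_inter.mp hx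
      obtain ⟨i, -, hxi⟩ := Finset.mem_biUnion.mp hx2
      obtain ⟨s, hs, c, hc, rfl⟩ := Finset.mem_mul.mp hxi
      have hxtr : s * c ∈ transl (S i) c := Finset.mem_image.mpr ⟨s, hs, rfl⟩
      have hcC' : c ∈ C' i :=
        Finset.mem_filter.mpr ⟨hc, ⟨s * c, Finset.mem_inter.mpr ⟨hxtr, hxF⟩⟩⟩
      refine Finset.mem_inter.mpr ⟨hxF, Finset.mem_biUnion.mpr
        ⟨c, Finset.mem_biUnion.mpr ⟨i, Finset.mem_univ i, hcC'⟩, ?_⟩⟩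
      exact Finset.mem_image.mpr ⟨s, hSbmem i s hs, rfl⟩
    exact_mod_cast Nat.cast_le.mpr (Finset.card_le_card hsub)
  · -- cardinality
    have hBsub : ∀ i, ∀ c ∈ C' i, B i c ⊆ Sb * Sb⁻¹ * F := by
      intro i c hc x hx
      obtain ⟨hcC0, x₀, hx₀⟩ := Finset.mem_filter.mp hc
      obtain ⟨hx₀tr, hx₀F⟩ := Finset.mem_inter.mp hx₀
      obtain ⟨s₀, hs₀, rfl⟩ := Finset.mem_image.mp hx₀tr
      have hxtr := (hBc i c hcC0).1 hx
      obtain ⟨s, hs, rfl⟩ := Finset.mem_image.mp hxtr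
      have : s * c = (s * s₀⁻¹) * (s₀ * c) := by group
      rw [this]
      exact Finset.mul_mem_mul
        (Finset.mul_mem_mul (hSbmem i s hs) (Finset.inv_mem_inv (hSbmem i s₀ hs₀))) hx₀F
    set U : Fin N → Finset G := fun i => (C' i).biUnion (B i) with hUdef
    have hUsub : ∀ i, U i ⊆ S i * C0 i := by
      intro i x hx
      obtain ⟨c, hc, hxB⟩ := Finset.mem_biUnion.mp hx
      have hcC0 := (Finset.mem_filter.mp hc).1
      obtain ⟨s, hs, rfl⟩ := Finset.mem_image.mp ((hBc i c hcC0).1 hxB)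
      exact Finset.mul_mem_mul hs hcC0
    have hUcard : ∀ i, (U i).card = ∑ c ∈ C' i, (B i c).card := by
      intro i
      refine Finset.card_biUnion ?_
      intro c hc c' hc' hne
      exact hBpair i (Finset.mem_filter.mp hc).1 (Finset.mem_filter.mp hc').1 hne
    have hBbig : ∀ i, ∀ c ∈ C' i, (1 - δ) * m ≤ ((B i c).card : ℝ) := by
      intro i c hc
      have h1 := (hBc i c (Finset.mem_filter.mp hc).1).2
      have h2 : (transl (S i) c).card = (S i).card :=
        Finset.card_image_of_injective _ (mul_left_injective c)
      have h3 : (m:ℝ) ≤ ((S i).card : ℝ) := by exact_mod_cast hmin i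
      rw [h2] at h1
      nlinarith
    have hstep : (1 - δ) * m * ((Finset.univ.biUnion C').card : ℝ)
        ≤ ((Finset.univ.biUnion U).card : ℝ) := by
      have h1 : ((Finset.univ.biUnion C').card : ℝ) ≤ ∑ i, ((C' i).card : ℝ) := by
        exact_mod_cast Nat.cast_le.mpr (Finset.card_biUnion_le)
      have h2 : ∀ i, (1 - δ) * m * ((C' i).card : ℝ) ≤ ((U i).card : ℝ) := by
        intro i
        rw [hUcard i]
        push_cast
        calc (1 - δ) * m * ((C' i).card : ℝ) = ∑ _c ∈ C' i, (1 - δ) * m := by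
              rw [Finset.sum_const, nsmul_eq_mul]; ring
          _ ≤ ∑ c ∈ C' i, ((B i c).card : ℝ) := Finset.sum_le_sum (hBbig i)
      have h3 : (Finset.univ.biUnion U).card = ∑ i, (U i).card := by
        refine Finset.card_biUnion ?_
        intro i _ j _ hij
        exact Finset.disjoint_of_subset_left (hUsub i)
          (Finset.disjoint_of_subset_right (hUsub j) (hdisj i j hij))
      calc (1 - δ) * m * ((Finset.univ.biUnion C').card : ℝ)
          ≤ (1 - δ) * m * ∑ i, ((C' i).card : ℝ) := by
            exact mul_le_mul_of_nonneg_left h1 (le_of_lt hδm)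
        _ = ∑ i, (1 - δ) * m * ((C' i).card : ℝ) := by rw [Finset.mul_sum]
        _ ≤ ∑ i, ((U i).card : ℝ) := Finset.sum_le_sum fun i _ => h2 i
        _ = ((Finset.univ.biUnion U).card : ℝ) := by rw [h3]; push_cast; rfl
    have hUbig : Finset.univ.biUnion U ⊆ Sb * Sb⁻¹ * F := by
      intro x hx
      obtain ⟨i, -, hxi⟩ := Finset.mem_biUnion.mp hx
      obtain ⟨c, hc, hxB⟩ := Finset.mem_biUnion.mp hxi
      exact hBsub i c hc hxB
    have hbig : ((Sb * Sb⁻¹ * F).card : ℝ) ≤ (1 + δ) * F.card := by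
      have h1 : Sb * Sb⁻¹ * F ⊆ F ∪ ((Sb * Sb⁻¹ * F) \ F) := by
        intro x hx
        by_cases hxF : x ∈ F
        · exact Finset.mem_union_left _ hxF
        · exact Finset.mem_union_right _ (Finset.mem_sdiff.mpr ⟨hx, hxF⟩)
      have h2 : ((Sb * Sb⁻¹ * F).card : ℝ) ≤ (F.card : ℝ) + (((Sb * Sb⁻¹ * F) \ F).card : ℝ) := by
        have := le_trans (Finset.card_le_card h1) (Finset.card_union_le _ _)
        exact_mod_cast this
      have h3 : (((Sb * Sb⁻¹ * F) \ F).card : ℝ) ≤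
          ((((Sb * Sb⁻¹ * F) \ F) ∪ (F \ (Sb * Sb⁻¹ * F))).card : ℝ) := by
        exact_mod_cast Nat.cast_le.mpr (Finset.card_le_card Finset.subset_union_left)
      linarith
    have hfinal : (1 - δ) * m * ((Finset.univ.biUnion C').card : ℝ) ≤ (1 + δ) * F.card := by
      calc (1 - δ) * m * ((Finset.univ.biUnion C').card : ℝ)
          ≤ ((Finset.univ.biUnion U).card : ℝ) := hstep
        _ ≤ ((Sb * Sb⁻¹ * F).card : ℝ) := by exact_mod_cast Nat.cast_le (α := ℝ) |>.mpr (Finset.card_le_card hUbig)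
        _ ≤ (1 + δ) * F.card := hbig
    rw [le_div_iff₀ hδm]
    linarith
end

section
/- Upper density bound: Let G be a countable amenable group with fixed Følner sequence {F_n}, X a G-subshift, {S₁,…,S_N} a collection that δ-quasitiles G with m = minᵢ|Sᵢ| and S = ⋃ᵢ Sᵢ, and k ≥ 1. If F ⊆ X is (S⁻¹,k)-disjoint, then the upper density D̄(F) := limsup_n sup_{x∈X} |{g ∈ F_n : σᵍx ∈ F}| / |F_n| satisfies D̄(F) ≤ k(1+δ)/((1-δ)m) + δ. -/
open Pointwise

/-- A Følner sequence for `G`: nonempty finite sets with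
`|K Fₙ △ Fₙ| / |Fₙ| → 0` for every finite `K ⊆ G`. -/
def IsFolner {G : Type*} [Group G] [DecidableEq G] (Fn : ℕ → Finset G) : Prop :=
  (∀ n, (Fn n).Nonempty) ∧
    ∀ K : Finset G, Filter.Tendsto
      (fun n => ((((K * Fn n) \ Fn n) ∪ (Fn n \ (K * Fn n))).card : ℝ) / (Fn n).card)
      Filter.atTop (nhds 0)


lemma shiftMap_mul {G A : Type*} [Group G] (g h : G) (x : G → A) :
    shiftMap (g * h) x = shiftMap g (shiftMap h x) := by
  funext a; simp [shiftMap, mul_assoc]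

lemma shiftMap_inv_self {G A : Type*} [Group G] (s : G) (y : G → A) :
    shiftMap s⁻¹ (shiftMap s y) = y := by
  funext a; simp [shiftMap, mul_assoc]

/-- Upper density bound: if `{S₁,…,S_N}` δ-quasitiles `G` with `m = minᵢ|Sᵢ|`,
`S = ⋃ᵢSᵢ`, and `F ⊆ X` is `(S⁻¹,k)`-disjoint, then the upper density of visits to
`F` along the Følner sequence is at most `k(1+δ)/((1-δ)m) + δ`. -/
theorem upper_density_bound {G A : Type*} [Group G] [Countable G] [DecidableEq G]
    (Fn : ℕ → Finset G) (hFol : IsFolner Fn)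
    (X : Set (G → A)) (hXi : ∀ g : G, ∀ x ∈ X, shiftMap g x ∈ X)
    (δ : ℝ) (hδ0 : 0 < δ) (hδ1 : δ < 1) (N : ℕ) [NeZero N]
    (S : Fin N → Finset G) (hQT : QuasiTiles δ S)
    (m : ℕ) (hmin : ∀ i, m ≤ (S i).card) (hm' : ∃ i, (S i).card = m)
    (Sb : Finset G) (hSb : Sb = Finset.univ.biUnion S)
    (k : ℕ) (hk : 1 ≤ k)
    (F : Set (G → A)) (hFX : F ⊆ X)
    (hdisj : ∀ P : Finset G, P ⊆ Sb → P.card = k → (⋂ s ∈ P, shiftMap s⁻¹ '' F) = ∅) :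
    Filter.limsup (fun n => ⨆ x : X,
        (Set.ncard {g : G | g ∈ Fn n ∧ shiftMap g (x : G → A) ∈ F} : ℝ) / (Fn n).card)
      Filter.atTop ≤ (k : ℝ) * (1 + δ) / ((1 - δ) * m) + δ := by
  classical
  obtain ⟨hmono, hone, hC⟩ := hQT
  obtain ⟨hne, hFolK⟩ := hFol
  -- basic positivity facts
  have hm1 : (1 : ℕ) ≤ m := by
    obtain ⟨i, hi⟩ := hm'
    rw [← hi]
    exact Finset.card_pos.mpr ⟨1, hone i⟩
  have h1δ : (0:ℝ) < 1 - δ := by linarith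
  have hM : (0:ℝ) < (1 - δ) * m := by
    have : (1:ℝ) ≤ (m:ℝ) := by exact_mod_cast hm1
    nlinarith
  have hL0 : (0:ℝ) ≤ (k : ℝ) * (1 + δ) / ((1 - δ) * m) + δ := by
    have : (0:ℝ) ≤ (k : ℝ) * (1 + δ) / ((1 - δ) * m) :=
      div_nonneg (by positivity) (le_of_lt hM)
    linarith
  set u : ℕ → ℝ := fun n => ⨆ x : X,
      (Set.ncard {g : G | g ∈ Fn n ∧ shiftMap g (x : G → A) ∈ F} : ℝ) / (Fn n).card with hu
  have h0le : ∀ n, 0 ≤ u n := fun n =>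
    Real.iSup_nonneg fun x => div_nonneg (Nat.cast_nonneg _) (Nat.cast_nonneg _)
  set K : Finset G := Sb * Sb⁻¹ with hK
  have h1Sb : (1 : G) ∈ Sb := by
    rw [hSb]
    exact Finset.mem_biUnion.mpr ⟨⟨0, Nat.pos_of_ne_zero (NeZero.ne N)⟩, Finset.mem_univ _,
      hone _⟩
  have hev : ∀ᶠ n in Filter.atTop, u n ≤ (k : ℝ) * (1 + δ) / ((1 - δ) * m) + δ := by
    filter_upwards [(hFolK K).eventually_lt_const hδ0] with n hn
    have hcpos : (0:ℝ) < ((Fn n).card : ℝ) := by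
      exact_mod_cast Finset.card_pos.mpr (hne n)
    have hsd : ((((K * Fn n) \ Fn n) ∪ (Fn n \ (K * Fn n))).card : ℝ) < δ * (Fn n).card := by
      rw [div_lt_iff₀ hcpos] at hn
      exact hn
    -- |K * Fn n| ≤ (1+δ)|Fn n|
    have hKF : ((K * Fn n).card : ℝ) ≤ (1 + δ) * (Fn n).card := by
      have hsub : K * Fn n ⊆ Fn n ∪ ((K * Fn n) \ Fn n) := by
        intro a ha
        by_cases h : a ∈ Fn n
        · exact Finset.mem_union_left _ h
        · exact Finset.mem_union_right _ (Finset.mem_sdiff.mpr ⟨ha, h⟩)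
      have h1 : (K * Fn n).card ≤ (Fn n).card + ((K * Fn n) \ Fn n).card :=
        le_trans (Finset.card_le_card hsub) (Finset.card_union_le _ _)
      have h2 : (((K * Fn n) \ Fn n).card : ℝ)
          ≤ ((((K * Fn n) \ Fn n) ∪ (Fn n \ (K * Fn n))).card : ℝ) := by
        exact_mod_cast Finset.card_le_card (Finset.subset_union_left)
      have h1' : ((K * Fn n).card : ℝ) ≤ ((Fn n).card : ℝ) + (((K * Fn n) \ Fn n).card : ℝ) := by
        exact_mod_cast h1
      nlinarith
    apply Real.iSup_le _ hL0
    rintro ⟨x, hx⟩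
    simp only []
    -- the visit set
    set V : Finset G := (Fn n).filter (fun g => shiftMap g x ∈ F) with hV
    have hVset : {g : G | g ∈ Fn n ∧ shiftMap g x ∈ F} = (V : Set G) := by
      ext g; simp [hV]
    rw [hVset, Set.ncard_coe_finset]
    -- quasitiling of Fn n
    obtain ⟨Cs, hCs⟩ := hC (Fn n)
    obtain ⟨hBex, hDisjIJ, hCover⟩ := hCs
    choose Bf hBf hBpair using hBex
    set U : Finset G := Finset.univ.biUnion (fun i => S i * Cs i) with hU
    set C' : Fin N → Finset G :=
      fun i => (Cs i).filter (fun c => ((transl (S i) c) ∩ Fn n).Nonempty) with hC'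
    have hC'sub : ∀ i, C' i ⊆ Cs i := fun i => Finset.filter_subset _ _
    -- at most k visits per tile translate
    have claimA : ∀ i : Fin N, ∀ c : G, (V ∩ transl (S i) c).card ≤ k := by
      intro i c
      set y := shiftMap c x with hy
      set T : Finset G := (S i).filter (fun s => shiftMap s y ∈ F) with hT
      have hsub : V ∩ transl (S i) c ⊆ transl T c := by
        intro g hg
        rw [Finset.mem_inter] at hg
        obtain ⟨hgV, hgt⟩ := hg
        rw [transl, Finset.mem_image] at hgt
        obtain ⟨s, hs, rfl⟩ := hgt
        rw [transl, Finset.mem_image]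
        refine ⟨s, ?_, rfl⟩
        rw [hT, Finset.mem_filter]
        refine ⟨hs, ?_⟩
        have h2 := (Finset.mem_filter.mp hgV).2
        rwa [shiftMap_mul] at h2
      have h1 : (V ∩ transl (S i) c).card ≤ T.card := by
        calc (V ∩ transl (S i) c).card ≤ (transl T c).card := Finset.card_le_card hsub
        _ = T.card := Finset.card_image_of_injective _ (mul_left_injective c)
      by_contra hlt
      push_neg at hlt
      have hk2 : k ≤ T.card := le_of_lt (lt_of_lt_of_le hlt h1)
      obtain ⟨P, hPT, hPcard⟩ := Finset.exists_subset_card_eq hk2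
      have hPSb : P ⊆ Sb := by
        intro s hs
        rw [hSb]
        have hsT := hPT hs
        rw [hT, Finset.mem_filter] at hsT
        exact Finset.mem_biUnion.mpr ⟨i, Finset.mem_univ i, hsT.1⟩
      have hiE := hdisj P hPSb hPcard
      have hyI : y ∈ ⋂ s ∈ P, shiftMap s⁻¹ '' F := by
        simp only [Set.mem_iInter]
        intro s hs
        have hsF : shiftMap s y ∈ F := by
          have := hPT hs
          rw [hT, Finset.mem_filter] at this
          exact this.2
        exact ⟨shiftMap s y, hsF, shiftMap_inv_self s y⟩
      rw [hiE] at hyI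
      exact hyI
    -- covered part of V
    have hVU : ((V ∩ U).card : ℝ) ≤ (k : ℝ) * ∑ i, ((C' i).card : ℝ) := by
      have hsub1 : V ∩ U ⊆ Finset.univ.biUnion (fun i => V ∩ (S i * Cs i)) := by
        intro g hg
        rw [Finset.mem_inter, hU, Finset.mem_biUnion] at hg
        obtain ⟨hgV, i, hi, hgi⟩ := hg
        exact Finset.mem_biUnion.mpr ⟨i, hi, Finset.mem_inter.mpr ⟨hgV, hgi⟩⟩
      have hper : ∀ i : Fin N, (V ∩ (S i * Cs i)).card ≤ k * (C' i).card := by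
        intro i
        have hsub2 : V ∩ (S i * Cs i) ⊆ (C' i).biUnion (fun c => V ∩ transl (S i) c) := by
          intro g hg
          rw [Finset.mem_inter] at hg
          obtain ⟨hgV, hgm⟩ := hg
          rw [Finset.mem_mul] at hgm
          obtain ⟨s, hs, c, hc, rfl⟩ := hgm
          have hmem : s * c ∈ transl (S i) c := by
            rw [transl, Finset.mem_image]; exact ⟨s, hs, rfl⟩
          have hgF : s * c ∈ Fn n := (Finset.mem_filter.mp hgV).1
          have hcC' : c ∈ C' i := by
            rw [hC', Finset.mem_filter]
            exact ⟨hc, ⟨s * c, Finset.mem_inter.mpr ⟨hmem, hgF⟩⟩⟩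
          exact Finset.mem_biUnion.mpr ⟨c, hcC', Finset.mem_inter.mpr ⟨hgV, hmem⟩⟩
        calc (V ∩ (S i * Cs i)).card ≤ ((C' i).biUnion (fun c => V ∩ transl (S i) c)).card :=
              Finset.card_le_card hsub2
        _ ≤ ∑ c ∈ C' i, (V ∩ transl (S i) c).card := Finset.card_biUnion_le
        _ ≤ ∑ _c ∈ C' i, k := Finset.sum_le_sum (fun c _ => claimA i c)
        _ = (C' i).card * k := by rw [Finset.sum_const, smul_eq_mul]
        _ = k * (C' i).card := mul_comm _ _
      have hN : (V ∩ U).card ≤ ∑ i, k * (C' i).card := by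
        calc (V ∩ U).card ≤ (Finset.univ.biUnion (fun i => V ∩ (S i * Cs i))).card :=
              Finset.card_le_card hsub1
        _ ≤ ∑ i, (V ∩ (S i * Cs i)).card := Finset.card_biUnion_le
        _ ≤ ∑ i, k * (C' i).card := Finset.sum_le_sum (fun i _ => hper i)
      calc ((V ∩ U).card : ℝ) ≤ ((∑ i, k * (C' i).card : ℕ) : ℝ) := by exact_mod_cast hN
      _ = (k : ℝ) * ∑ i, ((C' i).card : ℝ) := by push_cast; rw [Finset.mul_sum]
    -- uncovered part of V
    have hVnU : ((V \ U).card : ℝ) ≤ δ * (Fn n).card := by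
      have hd : Disjoint (V \ U) (Fn n ∩ U) := by
        rw [Finset.disjoint_left]
        intro a ha ha2
        exact (Finset.mem_sdiff.mp ha).2 (Finset.mem_inter.mp ha2).2
      have hsub3 : (V \ U) ∪ (Fn n ∩ U) ⊆ Fn n := by
        intro a ha
        rcases Finset.mem_union.mp ha with h | h
        · exact (Finset.mem_filter.mp (Finset.mem_sdiff.mp h).1).1
        · exact (Finset.mem_inter.mp h).1
      have h4 : (V \ U).card + (Fn n ∩ U).card ≤ (Fn n).card := by
        rw [← Finset.card_union_of_disjoint hd]
        exact Finset.card_le_card hsub3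
      have h4' : ((V \ U).card : ℝ) + ((Fn n ∩ U).card : ℝ) ≤ ((Fn n).card : ℝ) := by
        exact_mod_cast h4
      have h5 : (1 - δ) * ((Fn n).card : ℝ) ≤ ((Fn n ∩ U).card : ℝ) := hCover
      linarith
    -- lower bound on |B| and sum over centers
    have hBcard : ∀ i : Fin N, ∀ c ∈ C' i, (1 - δ) * (m : ℝ) ≤ ((Bf i c).card : ℝ) := by
      intro i c hc
      obtain ⟨hsubB, hgt⟩ := hBf i c (hC'sub i hc)
      have hcardT : ((transl (S i) c).card : ℝ) = ((S i).card : ℝ) := by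
        rw [transl, Finset.card_image_of_injective _ (mul_left_injective c)]
      have hmle : (m:ℝ) ≤ ((S i).card : ℝ) := by exact_mod_cast hmin i
      calc (1 - δ) * (m : ℝ) ≤ (1 - δ) * ((transl (S i) c).card : ℝ) := by
            rw [hcardT]; exact mul_le_mul_of_nonneg_left hmle (le_of_lt h1δ)
      _ ≤ ((Bf i c).card : ℝ) := le_of_lt hgt
    set W : Fin N → Finset G := fun i => (C' i).biUnion (Bf i) with hW
    have hWcard : ∀ i : Fin N, (1 - δ) * (m : ℝ) * ((C' i).card : ℝ) ≤ ((W i).card : ℝ) := by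
      intro i
      have hcb : (W i).card = ∑ c ∈ C' i, (Bf i c).card :=
        Finset.card_biUnion (fun c hc d hd hne =>
          hBpair i (hC'sub i hc) (hC'sub i hd) hne)
      rw [hcb]
      push_cast
      calc (1 - δ) * (m : ℝ) * ((C' i).card : ℝ) = ∑ _c ∈ C' i, (1 - δ) * (m : ℝ) := by
            rw [Finset.sum_const, nsmul_eq_mul]; ring
      _ ≤ ∑ c ∈ C' i, ((Bf i c).card : ℝ) := Finset.sum_le_sum (hBcard i)
    have hWsubSC : ∀ i : Fin N, W i ⊆ S i * Cs i := by
      intro i b hb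
      rw [hW, Finset.mem_biUnion] at hb
      obtain ⟨c, hc, hb⟩ := hb
      have hbt := (hBf i c (hC'sub i hc)).1 hb
      rw [transl, Finset.mem_image] at hbt
      obtain ⟨s, hs, rfl⟩ := hbt
      exact Finset.mul_mem_mul hs (hC'sub i hc)
    have hWdisj : ∀ i ∈ (Finset.univ : Finset (Fin N)), ∀ j ∈ Finset.univ, i ≠ j →
        Disjoint (W i) (W j) := fun i _ j _ hij =>
      (hDisjIJ i j hij).mono (hWsubSC i) (hWsubSC j)
    have hWK : ∀ i : Fin N, W i ⊆ K * Fn n := by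
      intro i b hb
      rw [hW, Finset.mem_biUnion] at hb
      obtain ⟨c, hc, hb⟩ := hb
      have hcfil := Finset.mem_filter.mp hc
      obtain ⟨f, hf⟩ := hcfil.2
      rw [Finset.mem_inter] at hf
      obtain ⟨hft, hfF⟩ := hf
      rw [transl, Finset.mem_image] at hft
      obtain ⟨s₀, hs₀, hfeq⟩ := hft
      have hbt := (hBf i c hcfil.1).1 hb
      rw [transl, Finset.mem_image] at hbt
      obtain ⟨s, hs, hbeq⟩ := hbt
      have hbe : b = (s * s₀⁻¹) * f := by rw [← hbeq, ← hfeq]; group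
      rw [hbe]
      refine Finset.mul_mem_mul (Finset.mul_mem_mul ?_ (Finset.inv_mem_inv ?_)) hfF
      · rw [hSb]; exact Finset.mem_biUnion.mpr ⟨i, Finset.mem_univ i, hs⟩
      · rw [hSb]; exact Finset.mem_biUnion.mpr ⟨i, Finset.mem_univ i, hs₀⟩
    have hsumW : (∑ i, ((W i).card : ℝ)) ≤ ((K * Fn n).card : ℝ) := by
      have hcb2 : (Finset.univ.biUnion W).card = ∑ i, (W i).card :=
        Finset.card_biUnion hWdisj
      have hsub4 : Finset.univ.biUnion W ⊆ K * Fn n :=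
        Finset.biUnion_subset.mpr (fun i _ => hWK i)
      have := Finset.card_le_card hsub4
      rw [hcb2] at this
      exact_mod_cast this
    have hSig : (1 - δ) * (m : ℝ) * (∑ i, ((C' i).card : ℝ)) ≤ ((K * Fn n).card : ℝ) := by
      rw [Finset.mul_sum]
      exact le_trans (Finset.sum_le_sum (fun i _ => hWcard i)) hsumW
    -- combine
    have hVtot : ((V).card : ℝ) ≤ (k : ℝ) * (∑ i, ((C' i).card : ℝ)) + δ * (Fn n).card := by
      have hsub5 : V ⊆ (V ∩ U) ∪ (V \ U) := by
        intro a ha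
        by_cases h : a ∈ U
        · exact Finset.mem_union_left _ (Finset.mem_inter.mpr ⟨ha, h⟩)
        · exact Finset.mem_union_right _ (Finset.mem_sdiff.mpr ⟨ha, h⟩)
      have h6 : V.card ≤ (V ∩ U).card + (V \ U).card :=
        le_trans (Finset.card_le_card hsub5) (Finset.card_union_le _ _)
      have h6' : ((V).card : ℝ) ≤ ((V ∩ U).card : ℝ) + ((V \ U).card : ℝ) := by
        exact_mod_cast h6
      linarith
    -- final arithmetic
    rw [div_le_iff₀ hcpos]
    have hSignn : (0:ℝ) ≤ ∑ i, ((C' i).card : ℝ) :=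
      Finset.sum_nonneg (fun i _ => Nat.cast_nonneg _)
    have hSigub : (1 - δ) * (m : ℝ) * (∑ i, ((C' i).card : ℝ)) ≤ (1 + δ) * (Fn n).card :=
      le_trans hSig hKF
    have hRM : (k : ℝ) * (1 + δ) / ((1 - δ) * m) * ((1 - δ) * m) = (k : ℝ) * (1 + δ) :=
      div_mul_cancel₀ _ (ne_of_gt hM)
    have hkn : (0:ℝ) ≤ (k : ℝ) := Nat.cast_nonneg _
    nlinarith [mul_le_mul_of_nonneg_left hSigub hkn,
      mul_le_mul_of_nonneg_right hVtot (le_of_lt hM), hM, hcpos]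
  have hbdd : Filter.IsBoundedUnder (· ≥ ·) Filter.atTop u :=
    Filter.isBoundedUnder_of ⟨0, h0le⟩
  exact Filter.limsup_le_of_le hbdd.isCoboundedUnder_le hev
end

section
/- Conditional entropy bound for nearly-identity factor maps: Let π : X → Y be a factor map between G-subshifts (X,T) and (Y,S) on the same finite alphabet 𝒜, where G is a countable amenable group with Følner sequence {F_n}. Define D̄(π) = limsup_n sup_{y∈Y} sup_{x∈π⁻¹(y)} |{g ∈ F_n : x(g) ≠ y(g)}|/|F_n|. If D̄(π) < 1/2, then the topological conditional entropy satisfies h(T | S) ≤ H(D̄(π)) + D̄(π)·log|𝒜|. -/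
open Pointwise

/-- The binary entropy function, in natural logarithms (consistent with using
`Real.log` for entropy below). -/
noncomputable def binEntLog (t : ℝ) : ℝ := -t * Real.log t - (1 - t) * Real.log (1 - t)

lemma sum_choose_le (N k : ℕ) (t : ℝ) (ht0 : 0 < t) (ht2 : t ≤ 1/2)
    (hk : (k : ℝ) ≤ t * N) (hkN : k ≤ N) :
    (∑ j ∈ Finset.range (k+1), (N.choose j : ℝ)) ≤ Real.exp (N * binEntLog t) := by
  have h1t : 0 < 1 - t := by linarith
  set r : ℝ := t / (1 - t) with hr
  have hr0 : 0 < r := div_pos ht0 h1t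
  have hr1 : r ≤ 1 := by
    rw [hr, div_le_one h1t]; linarith
  have hlogr : Real.log r ≤ 0 := Real.log_nonpos hr0.le hr1
  set E : ℝ := Real.exp (t * N * Real.log r + N * Real.log (1 - t)) with hE
  have key : ∀ j ∈ Finset.range (k+1),
      (N.choose j : ℝ) * E ≤ (N.choose j : ℝ) * (t ^ j * (1 - t) ^ (N - j)) := by
    intro j hj
    have hjk : j ≤ k := Nat.lt_succ_iff.mp (Finset.mem_range.mp hj)
    have hjN : j ≤ N := hjk.trans hkN
    have h1 : t ^ j * (1 - t) ^ (N - j) = Real.exp ((j : ℝ) * Real.log r + N * Real.log (1 - t)) := by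
      rw [Real.exp_add]
      have e1 : Real.exp ((j : ℝ) * Real.log r) = r ^ j := by
        rw [← Real.log_pow, Real.exp_log (pow_pos hr0 j)]
      have e2 : Real.exp ((N : ℝ) * Real.log (1 - t)) = (1 - t) ^ N := by
        rw [← Real.log_pow, Real.exp_log (pow_pos h1t N)]
      rw [e1, e2]
      have : (1 - t) ^ N = (1 - t) ^ j * (1 - t) ^ (N - j) := by
        rw [← pow_add, Nat.add_sub_cancel' hjN]
      rw [this, hr, div_pow]
      field_simp
    have h2 : t * N * Real.log r ≤ (j : ℝ) * Real.log r := by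
      have hj' : (j : ℝ) ≤ t * N := le_trans (by exact_mod_cast hjk) hk
      exact mul_le_mul_of_nonpos_right hj' hlogr
    have h3 : E ≤ t ^ j * (1 - t) ^ (N - j) := by
      rw [h1, hE]
      exact Real.exp_le_exp.mpr (by linarith)
    exact mul_le_mul_of_nonneg_left h3 (Nat.cast_nonneg _)
  have hsum1 : ∑ j ∈ Finset.range (N+1), (N.choose j : ℝ) * (t ^ j * (1 - t) ^ (N - j)) = 1 := by
    have hbin := add_pow t (1 - t) N
    rw [show t + (1 - t) = (1:ℝ) by ring, one_pow] at hbin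
    calc ∑ j ∈ Finset.range (N+1), (N.choose j : ℝ) * (t ^ j * (1 - t) ^ (N - j))
        = ∑ j ∈ Finset.range (N+1), t ^ j * (1 - t) ^ (N - j) * (N.choose j : ℝ) :=
          Finset.sum_congr rfl (fun j _ => by ring)
      _ = 1 := hbin.symm
  have hsum2 : ∑ j ∈ Finset.range (k+1), (N.choose j : ℝ) * (t ^ j * (1 - t) ^ (N - j)) ≤ 1 := by
    refine le_trans (Finset.sum_le_sum_of_subset_of_nonneg
      (Finset.range_subset_range.mpr (by omega)) ?_) (le_of_eq hsum1)
    intro j _ _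
    have h0 : (0:ℝ) ≤ t ^ j * (1 - t) ^ (N - j) := by positivity
    positivity
  have hES : E * (∑ j ∈ Finset.range (k+1), (N.choose j : ℝ)) ≤ 1 := by
    rw [Finset.mul_sum]
    calc ∑ j ∈ Finset.range (k+1), E * (N.choose j : ℝ)
        ≤ ∑ j ∈ Finset.range (k+1), (N.choose j : ℝ) * (t ^ j * (1 - t) ^ (N - j)) := by
          apply Finset.sum_le_sum
          intro j hj
          rw [mul_comm]
          exact key j hj
      _ ≤ 1 := hsum2
  have hEpos : 0 < E := Real.exp_pos _
  have hfin : (∑ j ∈ Finset.range (k+1), (N.choose j : ℝ)) ≤ 1 / E := by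
    rw [le_div_iff₀ hEpos]
    linarith [hES]
  refine hfin.trans (le_of_eq ?_)
  rw [hE, one_div, ← Real.exp_neg]
  congr 1
  have hlr : Real.log r = Real.log t - Real.log (1 - t) :=
    Real.log_div ht0.ne' h1t.ne'
  rw [hlr]
  unfold binEntLog
  ring

lemma ball_card_le {I A : Type*} [Fintype I] [DecidableEq I] [Fintype A] [DecidableEq A]
    [Nonempty A] (c : I → A) (k : ℕ) :
    ((Finset.univ.filter (fun p : I → A =>
        (Finset.univ.filter (fun i => p i ≠ c i)).card ≤ k)).card : ℝ) ≤
      (∑ j ∈ Finset.range (k+1), ((Fintype.card I).choose j : ℝ)) * (Fintype.card A : ℝ) ^ k := by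
  classical
  have ha : 1 ≤ Fintype.card A := Fintype.card_pos
  set T : Finset (Finset I) :=
    (Finset.range (k+1)).biUnion (fun j => Finset.powersetCard j (Finset.univ : Finset I)) with hT
  set F : Finset I → Finset (I → A) :=
    (fun D => Finset.univ.filter (fun p : I → A => ∀ i, i ∉ D → p i = c i)) with hF
  have hsub : (Finset.univ.filter (fun p : I → A =>
      (Finset.univ.filter (fun i => p i ≠ c i)).card ≤ k)) ⊆ T.biUnion F := by
    intro p hp
    rw [Finset.mem_filter] at hp
    set D := Finset.univ.filter (fun i => p i ≠ c i) with hD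
    rw [Finset.mem_biUnion]
    refine ⟨D, ?_, ?_⟩
    · rw [hT, Finset.mem_biUnion]
      exact ⟨D.card, Finset.mem_range.mpr (by omega), Finset.mem_powersetCard.mpr
        ⟨Finset.subset_univ _, rfl⟩⟩
    · rw [hF, Finset.mem_filter]
      refine ⟨Finset.mem_univ _, fun i hi => ?_⟩
      rw [hD] at hi
      simp only [Finset.mem_filter, Finset.mem_univ, true_and, not_not] at hi
      exact hi
  have hFcard : ∀ D ∈ T, (F D).card ≤ Fintype.card A ^ k := by
    intro D hD
    have hDk : D.card ≤ k := by
      rw [hT, Finset.mem_biUnion] at hD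
      obtain ⟨j, hj, hDj⟩ := hD
      rw [Finset.mem_powersetCard] at hDj
      rw [hDj.2]
      exact Nat.lt_succ_iff.mp (Finset.mem_range.mp hj)
    have hinj : (F D).card ≤ (Finset.univ : Finset (↥D → A)).card := by
      apply Finset.card_le_card_of_injOn (fun p (i : ↥D) => p i.val)
        (fun _ _ => Finset.mem_univ _)
      intro p hp q hq hpq
      simp only [Finset.mem_coe, hF, Finset.mem_filter] at hp hq
      funext i
      by_cases hi : i ∈ D
      · exact congrFun hpq ⟨i, hi⟩
      · rw [hp.2 i hi, hq.2 i hi]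
    refine hinj.trans ?_
    rw [Finset.card_univ, Fintype.card_fun, Fintype.card_coe]
    exact Nat.pow_le_pow_right (by omega) hDk
  have hTcard : T.card ≤ ∑ j ∈ Finset.range (k+1), (Fintype.card I).choose j := by
    refine (Finset.card_biUnion_le).trans ?_
    apply Finset.sum_le_sum
    intro j _
    rw [Finset.card_powersetCard, Finset.card_univ]
  have hnat : (Finset.univ.filter (fun p : I → A =>
      (Finset.univ.filter (fun i => p i ≠ c i)).card ≤ k)).card ≤
      (∑ j ∈ Finset.range (k+1), (Fintype.card I).choose j) * Fintype.card A ^ k := by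
    calc (Finset.univ.filter (fun p : I → A =>
          (Finset.univ.filter (fun i => p i ≠ c i)).card ≤ k)).card
        ≤ (T.biUnion F).card := Finset.card_le_card hsub
      _ ≤ ∑ D ∈ T, (F D).card := Finset.card_biUnion_le
      _ ≤ ∑ _D ∈ T, Fintype.card A ^ k := Finset.sum_le_sum hFcard
      _ = T.card * Fintype.card A ^ k := by rw [Finset.sum_const, smul_eq_mul]
      _ ≤ (∑ j ∈ Finset.range (k+1), (Fintype.card I).choose j) * Fintype.card A ^ k :=
          Nat.mul_le_mul_right _ hTcard
  calc ((Finset.univ.filter (fun p : I → A =>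
        (Finset.univ.filter (fun i => p i ≠ c i)).card ≤ k)).card : ℝ)
      ≤ ((∑ j ∈ Finset.range (k+1), (Fintype.card I).choose j) * Fintype.card A ^ k : ℕ) := by
        exact_mod_cast hnat
    _ = (∑ j ∈ Finset.range (k+1), ((Fintype.card I).choose j : ℝ)) * (Fintype.card A : ℝ) ^ k := by
        push_cast; ring

/-- Conditional entropy bound for nearly-identity factor maps between `G`-subshifts:
if `D̄(π) < 1/2` then `h(T|S) ≤ H(D̄(π)) + D̄(π)·log|𝒜|`, where `D̄(π)` is the upper
density of symbol changes and `h(T|S)` is the topological conditional entropy,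
computed for subshifts as `limsup_n (1/|Fₙ|) log sup_y |{x(Fₙ) : x ∈ π⁻¹(y)}|`. -/
theorem cond_entropy_le_of_small_density {G A : Type*} [Group G] [Countable G]
    [DecidableEq G] [Fintype A] [TopologicalSpace A] [DiscreteTopology A]
    (Fn : ℕ → Finset G) (hFol : IsFolner Fn)
    (X Y : Set (G → A)) (hXc : IsClosed X) (hYc : IsClosed Y)
    (hXi : ∀ g : G, ∀ x ∈ X, shiftMap g x ∈ X) (hYi : ∀ g : G, ∀ y ∈ Y, shiftMap g y ∈ Y)
    (π : X → Y) (hπc : Continuous π) (hπs : Function.Surjective π)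
    (hπe : ∀ (g : G) (x : X) (hgx : shiftMap g (x : G → A) ∈ X),
      ((π ⟨shiftMap g (x : G → A), hgx⟩ : G → A)) = shiftMap g (π x : G → A))
    (d h : ℝ)
    (hd : d = Filter.limsup (fun n => ⨆ x : X,
        (Set.ncard {g : G | g ∈ Fn n ∧ (x : G → A) g ≠ (π x : G → A) g} : ℝ) / (Fn n).card)
      Filter.atTop)
    (hh : h = Filter.limsup (fun n => Real.log (⨆ y : Y,
        (Set.ncard ((fun x : G → A => fun g : Fn n => x g) ''
          {x : G → A | ∃ hx : x ∈ X, π ⟨x, hx⟩ = y}) : ℝ)) / (Fn n).card)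
      Filter.atTop)
    (hd2 : d < 1 / 2) :
    h ≤ binEntLog d + d * Real.log (Fintype.card A) := by

  classical
  rcases isEmpty_or_nonempty A with hA | hA
  · -- A empty: X and Y have no elements, both sides are 0
    haveI hX : IsEmpty X := ⟨fun x => hA.false (x.1 1)⟩
    haveI hY : IsEmpty Y := ⟨fun y => hA.false (y.1 1)⟩
    have hd0 : d = 0 := by
      rw [hd]
      have : (fun n => ⨆ x : X,
          (Set.ncard {g : G | g ∈ Fn n ∧ (x : G → A) g ≠ (π x : G → A) g} : ℝ) / (Fn n).card)
          = fun _ => (0:ℝ) := by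
        funext n; rw [Real.iSup_of_isEmpty _]
      rw [this, Filter.limsup_const]
    have hh0 : h = 0 := by
      rw [hh]
      have : (fun n => Real.log (⨆ y : Y,
          (Set.ncard ((fun x : G → A => fun g : Fn n => x g) ''
            {x : G → A | ∃ hx : x ∈ X, π ⟨x, hx⟩ = y}) : ℝ)) / (Fn n).card)
          = fun _ => (0:ℝ) := by
        funext n; rw [Real.iSup_of_isEmpty _, Real.log_zero, zero_div]
      rw [this, Filter.limsup_const]
    rw [hh0, hd0]
    simp [binEntLog]
  · have ha1 : (1:ℝ) ≤ Fintype.card A := by exact_mod_cast Fintype.card_pos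
    have hloga : 0 ≤ Real.log (Fintype.card A) := Real.log_nonneg ha1
    set u : ℕ → ℝ := fun n => ⨆ x : X,
        (Set.ncard {g : G | g ∈ Fn n ∧ (x : G → A) g ≠ (π x : G → A) g} : ℝ) / (Fn n).card
      with hu_def
    set v : ℕ → ℝ := fun n => Real.log (⨆ y : Y,
        (Set.ncard ((fun x : G → A => fun g : Fn n => x g) ''
          {x : G → A | ∃ hx : x ∈ X, π ⟨x, hx⟩ = y}) : ℝ)) / (Fn n).card
      with hv_def
    have hNpos : ∀ n, 0 < ((Fn n).card : ℝ) := fun n => by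
      exact_mod_cast Finset.card_pos.mpr (hFol.1 n)
    have hterm1 : ∀ n, ∀ x : X,
        (Set.ncard {g : G | g ∈ Fn n ∧ (x : G → A) g ≠ (π x : G → A) g} : ℝ) / (Fn n).card ≤ 1 := by
      intro n x
      rw [div_le_one (hNpos n)]
      have hsub : {g : G | g ∈ Fn n ∧ (x : G → A) g ≠ (π x : G → A) g} ⊆ ↑(Fn n) :=
        fun g hg => hg.1
      have := Set.ncard_le_ncard hsub (Fn n).finite_toSet
      rw [Set.ncard_coe_finset] at this
      exact_mod_cast this
    have hu0 : ∀ n, 0 ≤ u n := fun n =>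
      Real.iSup_nonneg (fun x => div_nonneg (Nat.cast_nonneg _) (Nat.cast_nonneg _))
    have hu1 : ∀ n, u n ≤ 1 := fun n => Real.iSup_le (hterm1 n) zero_le_one
    have hd0 : 0 ≤ d := by
      rw [hd]
      exact Filter.le_limsup_of_frequently_le (Filter.Frequently.of_forall hu0)
        (Filter.isBoundedUnder_of ⟨1, hu1⟩)
    -- the key estimate for every t ∈ (d, 1/2)
    have key : ∀ t : ℝ, d < t → t < 1/2 →
        h ≤ binEntLog t + t * Real.log (Fintype.card A) := by
      intro t hdt ht2
      have ht0 : 0 < t := lt_of_le_of_lt hd0 hdt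
      have hev : ∀ᶠ n in Filter.atTop, u n < t := by
        refine Filter.eventually_lt_of_limsup_lt ?_
          (Filter.isBoundedUnder_of ⟨1, hu1⟩)
        rw [← hd]; exact hdt
      set B : ℝ := binEntLog t + t * Real.log (Fintype.card A) with hB
      have hBnn : 0 ≤ B := by
        have hlt : Real.log t ≤ 0 := Real.log_nonpos ht0.le (by linarith)
        have hlt2 : Real.log (1 - t) ≤ 0 := Real.log_nonpos (by linarith) (by linarith)
        have h1 : 0 ≤ -t * Real.log t := by nlinarith
        have h2 : 0 ≤ -(1 - t) * Real.log (1 - t) := by nlinarith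
        have h3 : 0 ≤ t * Real.log (Fintype.card A) := mul_nonneg ht0.le hloga
        rw [hB]; unfold binEntLog; nlinarith
      have hbound : ∀ᶠ n in Filter.atTop, v n ≤ B := by
        refine hev.mono (fun n hn => ?_)
        set k : ℕ := Nat.floor (t * ((Fn n).card : ℝ)) with hk_def
        have hkt : (k : ℝ) ≤ t * ((Fn n).card : ℝ) := Nat.floor_le (by positivity)
        have hkN : k ≤ (Fn n).card := by
          have h1 : t * ((Fn n).card : ℝ) ≤ (((Fn n).card : ℕ) : ℝ) := by nlinarith [hNpos n]
          calc k ≤ Nat.floor ((((Fn n).card : ℕ) : ℝ)) := Nat.floor_le_floor h1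
            _ = (Fn n).card := Nat.floor_natCast _
        -- every fiber pattern set lies in a Hamming ball of radius k
        have hy : ∀ y : Y,
            (Set.ncard ((fun x : G → A => fun g : Fn n => x g) ''
              {x : G → A | ∃ hx : x ∈ X, π ⟨x, hx⟩ = y}) : ℝ) ≤
            Real.exp (((Fn n).card : ℝ) * B) := by
          intro y
          set ball : Finset ({g // g ∈ Fn n} → A) :=
            Finset.univ.filter (fun p : {g // g ∈ Fn n} → A =>
              (Finset.univ.filter (fun i : {g // g ∈ Fn n} =>
                p i ≠ (y : G → A) i.val)).card ≤ k) with hball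
          have hsub : ((fun x : G → A => fun g : Fn n => x g) ''
              {x : G → A | ∃ hx : x ∈ X, π ⟨x, hx⟩ = y}) ⊆ ↑ball := by
            rintro p ⟨x, ⟨hx, hxy⟩, rfl⟩
            rw [Finset.mem_coe, hball, Finset.mem_filter]
            refine ⟨Finset.mem_univ _, ?_⟩
            -- count of disagreements of x with y on Fn n is at most k
            have hd1 : (Set.ncard {g : G | g ∈ Fn n ∧ x g ≠
                ((π ⟨x, hx⟩ : Y) : G → A) g} : ℝ) / (Fn n).card ≤ u n := by
              rw [hu_def]
              refine le_ciSup (f := fun x' : X =>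
                (Set.ncard {g : G | g ∈ Fn n ∧ (x' : G → A) g ≠ (π x' : G → A) g} : ℝ)
                  / (Fn n).card) ?_ (⟨x, hx⟩ : X)
              refine ⟨1, ?_⟩
              rintro _ ⟨x', rfl⟩
              exact hterm1 n x'
            have hd2 : (Set.ncard {g : G | g ∈ Fn n ∧ x g ≠ (y : G → A) g} : ℝ) ≤
                t * ((Fn n).card : ℝ) := by
              rw [← hxy]
              have hlt := lt_of_le_of_lt hd1 hn
              rw [div_lt_iff₀ (hNpos n)] at hlt
              linarith [hlt]
            have hd3 : Set.ncard {g : G | g ∈ Fn n ∧ x g ≠ (y : G → A) g} ≤ k := by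
              rw [hk_def]; exact Nat.le_floor hd2
            have hfin : {g : G | g ∈ Fn n ∧ x g ≠ (y : G → A) g} =
                ↑((Fn n).filter (fun g => x g ≠ (y : G → A) g)) := by
              ext g; simp [Finset.mem_filter]
            have hcc : (Finset.univ.filter (fun i : {g // g ∈ Fn n} =>
                ((fun g : Fn n => x (g : G)) i) ≠ (y : G → A) i.val)).card ≤
                ((Fn n).filter (fun g => x g ≠ (y : G → A) g)).card := by
              refine Finset.card_le_card_of_injOn (fun i => (i : G)) ?_ ?_
              · intro i hi
                simp only [Finset.mem_coe, Finset.mem_filter, Finset.mem_univ, true_and] at hi ⊢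
                exact ⟨i.2, hi⟩
              · intro i _ j _ hij
                exact Subtype.ext hij
            refine le_trans hcc ?_
            rw [← Set.ncard_coe_finset, ← hfin]
            exact hd3
          have hle1 := Set.ncard_le_ncard hsub (Set.toFinite _)
          rw [Set.ncard_coe_finset] at hle1
          have hle2 : ((ball.card : ℕ) : ℝ) ≤
              (∑ j ∈ Finset.range (k+1), (((Fn n).card).choose j : ℝ)) *
                (Fintype.card A : ℝ) ^ k := by
            have hb := ball_card_le (I := {g // g ∈ Fn n}) (A := A)
              (fun i => (y : G → A) i.val) k
            rw [Fintype.card_coe] at hb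
            exact hb
          have hle3 : (∑ j ∈ Finset.range (k+1), (((Fn n).card).choose j : ℝ)) ≤
              Real.exp (((Fn n).card : ℝ) * binEntLog t) :=
            sum_choose_le (Fn n).card k t ht0 ht2.le hkt hkN
          have hle4 : (Fintype.card A : ℝ) ^ k ≤
              Real.exp (t * ((Fn n).card : ℝ) * Real.log (Fintype.card A)) := by
            have hcA : (0:ℝ) < Fintype.card A := by linarith
            have e1 : (Fintype.card A : ℝ) ^ k =
                Real.exp ((k : ℝ) * Real.log (Fintype.card A)) := by
              rw [← Real.log_pow, Real.exp_log (pow_pos hcA k)]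
            rw [e1]
            apply Real.exp_le_exp.mpr
            exact mul_le_mul_of_nonneg_right hkt hloga
          calc (Set.ncard ((fun x : G → A => fun g : Fn n => x g) ''
              {x : G → A | ∃ hx : x ∈ X, π ⟨x, hx⟩ = y}) : ℝ)
              ≤ (ball.card : ℝ) := by exact_mod_cast hle1
            _ ≤ (∑ j ∈ Finset.range (k+1), (((Fn n).card).choose j : ℝ)) *
                  (Fintype.card A : ℝ) ^ k := hle2
            _ ≤ Real.exp (((Fn n).card : ℝ) * binEntLog t) *
                  Real.exp (t * ((Fn n).card : ℝ) * Real.log (Fintype.card A)) := by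
                apply mul_le_mul hle3 hle4 (by positivity)
                positivity
            _ = Real.exp (((Fn n).card : ℝ) * B) := by
                rw [← Real.exp_add, hB]; ring_nf
        have hsup : (⨆ y : Y, (Set.ncard ((fun x : G → A => fun g : Fn n => x g) ''
            {x : G → A | ∃ hx : x ∈ X, π ⟨x, hx⟩ = y}) : ℝ)) ≤
            Real.exp (((Fn n).card : ℝ) * B) :=
          Real.iSup_le hy (Real.exp_pos _).le
        have hlog : Real.log (⨆ y : Y, (Set.ncard ((fun x : G → A => fun g : Fn n => x g) ''
            {x : G → A | ∃ hx : x ∈ X, π ⟨x, hx⟩ = y}) : ℝ)) ≤ ((Fn n).card : ℝ) * B := by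
          rcases lt_or_ge 0 (⨆ y : Y, (Set.ncard ((fun x : G → A => fun g : Fn n => x g) ''
              {x : G → A | ∃ hx : x ∈ X, π ⟨x, hx⟩ = y}) : ℝ)) with hpos | hle
          · exact (Real.log_le_iff_le_exp hpos).mpr hsup
          · have h0 : (⨆ y : Y, (Set.ncard ((fun x : G → A => fun g : Fn n => x g) ''
                {x : G → A | ∃ hx : x ∈ X, π ⟨x, hx⟩ = y}) : ℝ)) = 0 :=
              le_antisymm hle (Real.iSup_nonneg (fun y => Nat.cast_nonneg _))
            rw [h0, Real.log_zero]
            positivity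
        rw [hv_def]
        show Real.log _ / ((Fn n).card : ℝ) ≤ B
        rw [div_le_iff₀ (hNpos n)]
        calc Real.log _ ≤ ((Fn n).card : ℝ) * B := hlog
          _ = B * ((Fn n).card : ℝ) := by ring
      have hv0 : ∀ n, 0 ≤ v n := by
        intro n
        rw [hv_def]
        apply div_nonneg _ (Nat.cast_nonneg _)
        by_cases hex : ∃ y : Y, 1 ≤ (Set.ncard ((fun x : G → A => fun g : Fn n => x g) ''
            {x : G → A | ∃ hx : x ∈ X, π ⟨x, hx⟩ = y}) : ℝ)
        · obtain ⟨y, hy1⟩ := hex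
          have hbdd : BddAbove (Set.range (fun y : Y =>
              (Set.ncard ((fun x : G → A => fun g : Fn n => x g) ''
                {x : G → A | ∃ hx : x ∈ X, π ⟨x, hx⟩ = y}) : ℝ))) := by
            refine ⟨(Fintype.card ({g // g ∈ Fn n} → A) : ℝ), ?_⟩
            rintro _ ⟨y', rfl⟩
            show (Set.ncard ((fun x : G → A => fun g : Fn n => x g) ''
                {x : G → A | ∃ hx : x ∈ X, π ⟨x, hx⟩ = y'}) : ℝ) ≤
              (Fintype.card ({g // g ∈ Fn n} → A) : ℝ)
            have hsub : ((fun x : G → A => fun g : Fn n => x g) ''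
                {x : G → A | ∃ hx : x ∈ X, π ⟨x, hx⟩ = y'}) ⊆ Set.univ := Set.subset_univ _
            have := Set.ncard_le_ncard hsub (Set.toFinite _)
            rw [Set.ncard_univ, Nat.card_eq_fintype_card] at this
            exact_mod_cast this
          refine Real.log_nonneg (le_trans hy1 (le_ciSup hbdd y))
        · push_neg at hex
          have hsup0 : (⨆ y : Y, (Set.ncard ((fun x : G → A => fun g : Fn n => x g) ''
              {x : G → A | ∃ hx : x ∈ X, π ⟨x, hx⟩ = y}) : ℝ)) = 0 := by
            refine le_antisymm (Real.iSup_le (fun y => ?_) le_rfl)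
              (Real.iSup_nonneg (fun y => Nat.cast_nonneg _))
            have := hex y
            have hz : Set.ncard ((fun x : G → A => fun g : Fn n => x g) ''
                {x : G → A | ∃ hx : x ∈ X, π ⟨x, hx⟩ = y}) = 0 := by
              by_contra hne
              have : 1 ≤ Set.ncard ((fun x : G → A => fun g : Fn n => x g) ''
                  {x : G → A | ∃ hx : x ∈ X, π ⟨x, hx⟩ = y}) := Nat.one_le_iff_ne_zero.mpr hne
              exact absurd (by exact_mod_cast this) (not_le.mpr (hex y))
            rw [hz]; norm_num
          rw [hsup0, Real.log_zero]
      rw [hh]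
      exact Filter.limsup_le_of_le
        (Filter.isCoboundedUnder_le_of_le _ hv0) hbound
    -- pass to the limit t → d⁺
    have hseq : ∀ m : ℕ, d < d + (1/2 - d)/(m+2) ∧ d + (1/2 - d)/(m+2) < 1/2 := by
      intro m
      have hm2 : (0:ℝ) < (m:ℝ) + 2 := by positivity
      have hpos : (0:ℝ) < (1/2 - d)/((m:ℝ)+2) := div_pos (by linarith) hm2
      constructor
      · linarith
      · have : (1/2 - d)/((m:ℝ)+2) < 1/2 - d := div_lt_self (by linarith) (by linarith)
        linarith
    have hlim : Filter.Tendsto (fun m : ℕ => d + (1/2 - d)/((m:ℝ)+2)) Filter.atTop (nhds d) := by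
      have h1 : Filter.Tendsto (fun m : ℕ => ((m:ℝ)+2)) Filter.atTop Filter.atTop :=
        Filter.tendsto_atTop_add_const_right _ 2 tendsto_natCast_atTop_atTop
      have h2 : Filter.Tendsto (fun m : ℕ => ((m:ℝ)+2)⁻¹) Filter.atTop (nhds 0) :=
        tendsto_inv_atTop_zero.comp h1
      have h3 : Filter.Tendsto (fun m : ℕ => (1/2 - d) * ((m:ℝ)+2)⁻¹) Filter.atTop (nhds 0) := by
        simpa using h2.const_mul (1/2 - d)
      have := Filter.Tendsto.const_add d h3
      simpa [div_eq_mul_inv] using this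
    have hfc : Continuous fun s : ℝ => binEntLog s + s * Real.log (Fintype.card A) := by
      have h1 := Real.continuous_mul_log
      have h2 : Continuous fun s : ℝ => (1 - s) * Real.log (1 - s) :=
        h1.comp (continuous_const.sub continuous_id)
      have h3 : Continuous fun s : ℝ =>
          -(s * Real.log s) - (1 - s) * Real.log (1 - s) + s * Real.log (Fintype.card A) :=
        ((h1.neg).sub h2).add (continuous_id.mul continuous_const)
      refine h3.congr (fun s => ?_)
      unfold binEntLog; ring
    have hft : Filter.Tendsto
        (fun m : ℕ => binEntLog (d + (1/2 - d)/((m:ℝ)+2)) +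
          (d + (1/2 - d)/((m:ℝ)+2)) * Real.log (Fintype.card A)) Filter.atTop
        (nhds (binEntLog d + d * Real.log (Fintype.card A))) :=
      (hfc.tendsto d).comp hlim
    exact ge_of_tendsto hft (Filter.Eventually.of_forall
      (fun m => key _ (hseq m).1 (hseq m).2))
end

section
/- Conditional entropy of joinings: Let (X₀,T₀), (X₁,T₁), (Y,S) be G-systems for a countable amenable group G, and π : X₀ → X₁ a factor map. Suppose (Wᵢ,Rᵢ) ⊆ Xᵢ × Y are topological joinings (closed invariant sets projecting onto both coordinates) for i = 0,1, and φ : W₀ → W₁ defined by φ(x,y) = (π(x),y) is a factor map. Then the topological conditional entropy satisfies h(R₀ | R₁) ≤ h(T₀ | T₁). -/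
open Pointwise

/-- Minimal cardinality of a subfamily of `V` covering `K`. -/
noncomputable def covNum {Z ι : Type*} (V : ι → Set Z) (K : Set Z) : ℕ :=
  sInf {m : ℕ | ∃ s : Finset ι, s.card = m ∧ K ⊆ ⋃ i ∈ s, V i}

/-- Topological conditional entropy of the action `T` relative to the map `φ`, along
the Følner sequence `Fn`: the sup over finite open covers `𝒰` of
`limsup_n (1/|Fₙ|) log sup_y N(⋁_{g∈Fₙ} T^{g⁻¹}𝒰 | φ⁻¹(y))`. -/
noncomputable def condEnt {G Z W : Type*} [TopologicalSpace Z] (T : G → Z → Z)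
    (Fn : ℕ → Finset G) (φ : Z → W) : EReal :=
  ⨆ U : {U : Finset (Set Z) // (∀ V ∈ U, IsOpen V) ∧ ⋃₀ (U : Set (Set Z)) = Set.univ},
    Filter.limsup (fun n =>
      ((Real.log (⨆ y : W, (covNum (fun f : {g : G // g ∈ Fn n} → {V : Set Z // V ∈ U.1} =>
          ⋂ g : {g : G // g ∈ Fn n}, (T g.1) ⁻¹' (f g).1) (φ ⁻¹' {y}) : ℝ))
        / (Fn n).card : ℝ) : EReal)) Filter.atTop

lemma covNum_le_card {Z ι : Type*} [Fintype ι] (V : ι → Set Z) (K : Set Z)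
    (h : K ⊆ ⋃ i, V i) : covNum V K ≤ Fintype.card ι :=
  Nat.sInf_le ⟨Finset.univ, Finset.card_univ, by simpa using h⟩

lemma one_le_covNum {Z ι : Type*} (V : ι → Set Z) (K : Set Z)
    (hK : K.Nonempty) (hcov : ∃ s : Finset ι, K ⊆ ⋃ i ∈ s, V i) :
    1 ≤ covNum V K := by
  rw [Nat.one_le_iff_ne_zero]
  intro h0
  rcases Nat.sInf_eq_zero.1 h0 with h | h
  · rcases h with ⟨s, hs0, hscov⟩
    rw [Finset.card_eq_zero] at hs0
    subst hs0
    rcases hK with ⟨k, hk⟩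
    simpa using hscov hk
  · rcases hcov with ⟨s, hs⟩
    exact absurd h (Set.nonempty_iff_ne_empty.1 ⟨s.card, s, rfl, hs⟩)

lemma covNum_le_covNum {Z Z' ι κ : Type*} (V : ι → Set Z) (W : κ → Set Z')
    (K : Set Z) (K' : Set Z')
    (hne : ∃ s : Finset ι, K ⊆ ⋃ i ∈ s, V i)
    (htr : ∀ s : Finset ι, K ⊆ ⋃ i ∈ s, V i →
      ∃ t : Finset κ, t.card ≤ s.card ∧ K' ⊆ ⋃ j ∈ t, W j) :
    covNum W K' ≤ covNum V K := by
  have hA : {m : ℕ | ∃ s : Finset ι, s.card = m ∧ K ⊆ ⋃ i ∈ s, V i}.Nonempty :=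
    ⟨hne.choose.card, hne.choose, rfl, hne.choose_spec⟩
  obtain ⟨s, hscard, hscov⟩ := Nat.sInf_mem hA
  obtain ⟨t, htc, htcov⟩ := htr s hscov
  calc covNum W K' ≤ t.card := Nat.sInf_le ⟨t, rfl, htcov⟩
    _ ≤ s.card := htc
    _ = covNum V K := hscard

/-- Conditional entropy of joinings: if `(Wᵢ,Rᵢ)` are topological joinings of
`(Xᵢ,Tᵢ)` with `(Y,S)` and `φ : W₀ → W₁`, `φ(x,y) = (π(x),y)`, is a factor map lifting
a factor map `π : X₀ → X₁`, then `h(R₀ | R₁) ≤ h(T₀ | T₁)`. -/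
theorem condEnt_joining_le {G : Type*} [Group G] [Countable G] [DecidableEq G]
    (Fn : ℕ → Finset G) (hFol : IsFolner Fn)
    {X0 X1 Y : Type*}
    [TopologicalSpace X0] [CompactSpace X0] [TopologicalSpace.MetrizableSpace X0]
    [TopologicalSpace X1] [CompactSpace X1] [TopologicalSpace.MetrizableSpace X1]
    [TopologicalSpace Y] [CompactSpace Y] [TopologicalSpace.MetrizableSpace Y]
    (T0 : G → X0 → X0) (T1 : G → X1 → X1) (S : G → Y → Y)
    (hT0 : ∀ g : G, Continuous (T0 g)) (hT1 : ∀ g : G, Continuous (T1 g))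
    (hS : ∀ g : G, Continuous (S g))
    (π : X0 → X1) (hπc : Continuous π) (hπs : Function.Surjective π)
    (hπe : ∀ (g : G) (x : X0), π (T0 g x) = T1 g (π x))
    (W0 : Set (X0 × Y)) (W1 : Set (X1 × Y)) (hW0c : IsClosed W0) (hW1c : IsClosed W1)
    (hW0i : ∀ g : G, ∀ p ∈ W0, (T0 g p.1, S g p.2) ∈ W0)
    (hW1i : ∀ g : G, ∀ p ∈ W1, (T1 g p.1, S g p.2) ∈ W1)
    (hW0p1 : ∀ x : X0, ∃ y, (x, y) ∈ W0) (hW0p2 : ∀ y : Y, ∃ x, (x, y) ∈ W0)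
    (hW1p1 : ∀ x : X1, ∃ y, (x, y) ∈ W1) (hW1p2 : ∀ y : Y, ∃ x, (x, y) ∈ W1)
    (R0 : G → W0 → W0)
    (hR0 : ∀ (g : G) (p : W0),
      ((R0 g p : X0 × Y)) = (T0 g (p : X0 × Y).1, S g (p : X0 × Y).2))
    (R1 : G → W1 → W1)
    (hR1 : ∀ (g : G) (p : W1),
      ((R1 g p : X1 × Y)) = (T1 g (p : X1 × Y).1, S g (p : X1 × Y).2))
    (φ : W0 → W1)
    (hφ : ∀ p : W0, ((φ p : X1 × Y)) = (π (p : X0 × Y).1, (p : X0 × Y).2))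
    (hφs : Function.Surjective φ) :
    condEnt R0 Fn φ ≤ condEnt T0 Fn π := by
  classical
  rcases isEmpty_or_nonempty X0 with hX0 | hX0
  · -- degenerate case: everything is empty
    have hY : IsEmpty Y := ⟨fun y => (hW0p2 y).elim fun x _ => hX0.false x⟩
    have hW1e : IsEmpty W1 := ⟨fun p => hY.false (p : X1 × Y).2⟩
    have hX1e : IsEmpty X1 := ⟨fun x => (hW1p1 x).elim fun y _ => hY.false y⟩
    haveI := hW1e
    haveI := hX1e
    have hL : condEnt R0 Fn φ ≤ 0 := by
      refine iSup_le fun U => ?_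
      have hterm : ∀ n : ℕ,
          ((Real.log (⨆ y : W1, (covNum (fun f : {g : G // g ∈ Fn n} → {V : Set W0 // V ∈ U.1} =>
            ⋂ g : {g : G // g ∈ Fn n}, (R0 g.1) ⁻¹' (f g).1) (φ ⁻¹' {y}) : ℝ))
            / (Fn n).card : ℝ) : EReal) = (0 : EReal) := by
        intro n
        have : (⨆ y : W1, (covNum (fun f : {g : G // g ∈ Fn n} → {V : Set W0 // V ∈ U.1} =>
            ⋂ g : {g : G // g ∈ Fn n}, (R0 g.1) ⁻¹' (f g).1) (φ ⁻¹' {y}) : ℝ)) = 0 := by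
          exact Real.iSup_of_isEmpty _
        rw [this, Real.log_zero, zero_div]
        rfl
      calc Filter.limsup _ Filter.atTop = (0 : EReal) := by
            rw [funext hterm]; exact Filter.limsup_const 0
        _ ≤ 0 := le_refl _
    refine hL.trans ?_
    refine le_trans ?_ (le_iSup _ (⟨{(Set.univ : Set X0)}, ?_, ?_⟩ :
      {U : Finset (Set X0) // (∀ V ∈ U, IsOpen V) ∧ ⋃₀ (U : Set (Set X0)) = Set.univ}))
    · have hterm : ∀ n : ℕ,
          ((Real.log (⨆ y : X1, (covNum (fun f : {g : G // g ∈ Fn n} →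
              {V : Set X0 // V ∈ ({(Set.univ : Set X0)} : Finset (Set X0))} =>
            ⋂ g : {g : G // g ∈ Fn n}, (T0 g.1) ⁻¹' (f g).1) (π ⁻¹' {y}) : ℝ))
            / (Fn n).card : ℝ) : EReal) = (0 : EReal) := by
        intro n
        have : (⨆ y : X1, (covNum (fun f : {g : G // g ∈ Fn n} →
              {V : Set X0 // V ∈ ({(Set.univ : Set X0)} : Finset (Set X0))} =>
            ⋂ g : {g : G // g ∈ Fn n}, (T0 g.1) ⁻¹' (f g).1) (π ⁻¹' {y}) : ℝ)) = 0 := by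
          exact Real.iSup_of_isEmpty _
        rw [this, Real.log_zero, zero_div]
        rfl
      exact le_of_eq (((Filter.limsup_congr (Filter.Eventually.of_forall hterm)).trans
        (Filter.limsup_const 0)).symm)
    · intro V hV
      simp only [Finset.mem_singleton] at hV
      subst hV; exact isOpen_univ
    · simp
  · -- main case
    have hY : Nonempty Y := ⟨(hW0p1 hX0.some).choose⟩
    have hX1 : Nonempty X1 := ⟨π hX0.some⟩
    have hW0ne : Nonempty W0 :=
      ⟨⟨(hX0.some, (hW0p1 hX0.some).choose), (hW0p1 hX0.some).choose_spec⟩⟩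
    have hW1ne : Nonempty W1 := ⟨φ hW0ne.some⟩
    refine iSup_le ?_
    rintro ⟨𝒰, h𝒰o, h𝒰c⟩
    have h𝒰ne : ∃ U0 : Set W0, U0 ∈ 𝒰 := by
      have hmem : (hW0ne.some : W0) ∈ ⋃₀ (𝒰 : Set (Set W0)) := by
        rw [h𝒰c]; trivial
      rcases hmem with ⟨U0, hU0, _⟩
      exact ⟨U0, hU0⟩
    letI mX : MetricSpace X0 := TopologicalSpace.metrizableSpaceMetric X0
    letI mY : MetricSpace Y := TopologicalSpace.metrizableSpaceMetric Y
    -- lift the cover of W0 to open sets in X0 × Y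
    have hlift : ∀ U : {U : Set W0 // U ∈ 𝒰}, ∃ O : Set (X0 × Y),
        IsOpen O ∧ Subtype.val ⁻¹' O = U.1 :=
      fun U => isOpen_induced_iff.1 (h𝒰o U.1 U.2)
    choose O hOopen hOpre using hlift
    have hcovO : W0 ⊆ ⋃ U : {U : Set W0 // U ∈ 𝒰}, O U := by
      intro p hp
      have hmem : (⟨p, hp⟩ : W0) ∈ ⋃₀ (𝒰 : Set (Set W0)) := by
        rw [h𝒰c]; trivial
      rcases hmem with ⟨U, hU, hpU⟩
      refine Set.mem_iUnion.2 ⟨⟨U, hU⟩, ?_⟩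
      have hgoal : (⟨p, hp⟩ : W0) ∈ Subtype.val ⁻¹' O ⟨U, hU⟩ := by
        rw [hOpre ⟨U, hU⟩]; exact hpU
      exact hgoal
    obtain ⟨δ, hδ, hleb⟩ := lebesgue_number_lemma_of_metric hW0c.isCompact hOopen hcovO
    -- finitely many balls of radius δ/2 cover X0
    obtain ⟨t, ht⟩ := isCompact_univ.elim_finite_subcover
      (fun x : X0 => Metric.ball x (δ / 2)) (fun _ => Metric.isOpen_ball)
      (fun x _ => Set.mem_iUnion.2 ⟨x, Metric.mem_ball_self (by linarith)⟩)
    set 𝒱 : Finset (Set X0) := t.image (fun x => Metric.ball x (δ / 2)) with h𝒱def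
    have h𝒱o : ∀ V ∈ 𝒱, IsOpen V := by
      intro V hV
      rcases Finset.mem_image.1 hV with ⟨x, _, rfl⟩
      exact Metric.isOpen_ball
    have h𝒱c : ⋃₀ (𝒱 : Set (Set X0)) = Set.univ := by
      apply Set.eq_univ_of_univ_subset
      intro x hx
      rcases Set.mem_iUnion₂.1 (ht (Set.mem_univ x)) with ⟨c, hc, hxc⟩
      exact ⟨Metric.ball c (δ / 2), Finset.mem_coe.2 (Finset.mem_image_of_mem _ hc), hxc⟩
    -- selection of a member of 𝒰 for each (V, y0)
    have hsel : ∀ (V : {V : Set X0 // V ∈ 𝒱}) (y0 : Y), ∃ Ue : {U : Set W0 // U ∈ 𝒰},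
        ∀ w : W0, (w : X0 × Y).1 ∈ V.1 → (w : X0 × Y).2 = y0 → w ∈ Ue.1 := by
      rintro ⟨V, hV⟩ y0
      by_cases hex : ∃ w : W0, (w : X0 × Y).1 ∈ V ∧ (w : X0 × Y).2 = y0
      · obtain ⟨w0, hw01, hw02⟩ := hex
        obtain ⟨i, hi⟩ := hleb (w0 : X0 × Y) w0.2
        refine ⟨i, fun w hw1 hw2 => ?_⟩
        have hball : (w : X0 × Y) ∈ Metric.ball (w0 : X0 × Y) δ := by
          rcases Finset.mem_image.1 hV with ⟨c, _, rfl⟩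
          have h1 : dist (w : X0 × Y).1 (w0 : X0 × Y).1 < δ := by
            calc dist (w : X0 × Y).1 (w0 : X0 × Y).1
                ≤ dist (w : X0 × Y).1 c + dist (w0 : X0 × Y).1 c := dist_triangle_right _ _ _
              _ < δ / 2 + δ / 2 := add_lt_add hw1 hw01
              _ = δ := by ring
          have h2 : dist (w : X0 × Y).2 (w0 : X0 × Y).2 = 0 := by
            rw [hw2, hw02, dist_self]
          rw [Metric.mem_ball, Prod.dist_eq]
          exact max_lt h1 (by rw [h2]; exact hδ)
        show w ∈ i.1
        rw [← hOpre i]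
        exact hi hball
      · exact ⟨⟨h𝒰ne.choose, h𝒰ne.choose_spec⟩,
          fun w h1 h2 => absurd ⟨w, h1, h2⟩ hex⟩
    choose sel hsel' using hsel
    -- bound by the limsup associated to the cover 𝒱
    refine le_trans ?_ (le_iSup _ (⟨𝒱, h𝒱o, h𝒱c⟩ :
      {U : Finset (Set X0) // (∀ V ∈ U, IsOpen V) ∧ ⋃₀ (U : Set (Set X0)) = Set.univ}))
    refine Filter.limsup_le_limsup (Filter.Eventually.of_forall fun n => ?_)
    -- per-n inequality
    have hall : ∀ x : X0, ∃ h : {g : G // g ∈ Fn n} → {V : Set X0 // V ∈ 𝒱},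
        ∀ g : {g : G // g ∈ Fn n}, T0 g.1 x ∈ (h g).1 := by
      intro x
      have hx : ∀ g : {g : G // g ∈ Fn n}, ∃ V : {V : Set X0 // V ∈ 𝒱}, T0 g.1 x ∈ V.1 := by
        intro g
        have hmem : T0 g.1 x ∈ ⋃₀ (𝒱 : Set (Set X0)) := by rw [h𝒱c]; trivial
        rcases hmem with ⟨V, hV, hxV⟩
        exact ⟨⟨V, hV⟩, hxV⟩
      choose h hh using hx
      exact ⟨h, hh⟩
    have hfull : ∀ x1 : X1, π ⁻¹' {x1} ⊆
        ⋃ h : {g : G // g ∈ Fn n} → {V : Set X0 // V ∈ 𝒱},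
          ⋂ g : {g : G // g ∈ Fn n}, (T0 g.1) ⁻¹' (h g).1 := by
      intro x1 x _
      obtain ⟨h, hh⟩ := hall x
      exact Set.mem_iUnion.2 ⟨h, Set.mem_iInter.2 hh⟩
    have hfull' : ∀ x1 : X1, π ⁻¹' {x1} ⊆
        ⋃ h ∈ (Finset.univ : Finset ({g : G // g ∈ Fn n} → {V : Set X0 // V ∈ 𝒱})),
          ⋂ g : {g : G // g ∈ Fn n}, (T0 g.1) ⁻¹' (h g).1 := by
      intro x1
      simpa using hfull x1
    -- key covering-number comparison
    have key : ∀ w1 : W1,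
        covNum (fun f : {g : G // g ∈ Fn n} → {V : Set W0 // V ∈ 𝒰} =>
          ⋂ g : {g : G // g ∈ Fn n}, (R0 g.1) ⁻¹' (f g).1) (φ ⁻¹' {w1}) ≤
        covNum (fun h : {g : G // g ∈ Fn n} → {V : Set X0 // V ∈ 𝒱} =>
          ⋂ g : {g : G // g ∈ Fn n}, (T0 g.1) ⁻¹' (h g).1) (π ⁻¹' {(w1 : X1 × Y).1}) := by
      intro w1
      refine covNum_le_covNum _ _ _ _ ⟨Finset.univ, hfull' (w1 : X1 × Y).1⟩ ?_
      intro s hscov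
      refine ⟨s.image (fun h => fun g : {g : G // g ∈ Fn n} => sel (h g) (S g.1 (w1 : X1 × Y).2)),
        Finset.card_image_le, ?_⟩
      intro w hw
      rw [Set.mem_preimage, Set.mem_singleton_iff] at hw
      have hval : ((φ w : W1) : X1 × Y) = (w1 : X1 × Y) := by rw [hw]
      rw [hφ w] at hval
      have h1 : π (w : X0 × Y).1 = (w1 : X1 × Y).1 := congrArg Prod.fst hval
      have h2 : (w : X0 × Y).2 = (w1 : X1 × Y).2 := congrArg Prod.snd hval
      rcases Set.mem_iUnion₂.1 (hscov (show (w : X0 × Y).1 ∈ π ⁻¹' {(w1 : X1 × Y).1} from h1))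
        with ⟨h, hhs, hxh⟩
      refine Set.mem_iUnion₂.2 ⟨_, Finset.mem_image_of_mem _ hhs, ?_⟩
      refine Set.mem_iInter.2 fun g => ?_
      show R0 g.1 w ∈ (sel (h g) (S g.1 (w1 : X1 × Y).2)).1
      refine hsel' (h g) (S g.1 (w1 : X1 × Y).2) (R0 g.1 w) ?_ ?_
      · rw [hR0]
        exact Set.mem_iInter.1 hxh g
      · rw [hR0, h2]
    -- boundedness of the right-hand family
    have hBdd : BddAbove (Set.range fun x1 : X1 =>
        ((covNum (fun h : {g : G // g ∈ Fn n} → {V : Set X0 // V ∈ 𝒱} =>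
          ⋂ g : {g : G // g ∈ Fn n}, (T0 g.1) ⁻¹' (h g).1) (π ⁻¹' {x1}) : ℕ) : ℝ)) := by
      refine ⟨(Fintype.card ({g : G // g ∈ Fn n} → {V : Set X0 // V ∈ 𝒱}) : ℝ), ?_⟩
      rintro _ ⟨x1, rfl⟩
      exact Nat.cast_le.2 (covNum_le_card _ _ (hfull x1))
    set supU : ℝ := ⨆ y : W1, (covNum (fun f : {g : G // g ∈ Fn n} → {V : Set W0 // V ∈ 𝒰} =>
      ⋂ g : {g : G // g ∈ Fn n}, (R0 g.1) ⁻¹' (f g).1) (φ ⁻¹' {y}) : ℝ) with hsupU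
    set supV : ℝ := ⨆ x1 : X1, (covNum (fun h : {g : G // g ∈ Fn n} → {V : Set X0 // V ∈ 𝒱} =>
      ⋂ g : {g : G // g ∈ Fn n}, (T0 g.1) ⁻¹' (h g).1) (π ⁻¹' {x1}) : ℝ) with hsupV
    have hsup_le : supU ≤ supV := by
      refine ciSup_le fun w1 => ?_
      refine le_trans ?_ (le_ciSup hBdd (w1 : X1 × Y).1)
      exact_mod_cast key w1
    have hsupV1 : (1 : ℝ) ≤ supV := by
      obtain ⟨x1⟩ := hX1
      refine le_trans ?_ (le_ciSup hBdd x1)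
      have hfib : (π ⁻¹' {x1}).Nonempty := by
        obtain ⟨x, hx⟩ := hπs x1
        exact ⟨x, hx⟩
      exact_mod_cast one_le_covNum _ _ hfib ⟨Finset.univ, hfull' x1⟩
    have hU0 : (0 : ℝ) ≤ supU := Real.iSup_nonneg fun _ => Nat.cast_nonneg _
    have hlog : Real.log supU ≤ Real.log supV := by
      rcases le_or_gt supU 1 with h | h
      · exact (Real.log_nonpos hU0 h).trans (Real.log_nonneg hsupV1)
      · exact Real.log_le_log (zero_lt_one.trans h) hsup_le
    have hdiv : Real.log supU / (Fn n).card ≤ Real.log supV / (Fn n).card :=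
      div_le_div_of_nonneg_right hlog (Nat.cast_nonneg _)
    exact EReal.coe_le_coe_iff.2 hdiv
end
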